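/- arXiv:2202.11598 — 8 statements merged into one kernel-verified Lean document; each statement's English description precedes it below -/
import Mathlib

section
/- Let X be a random vector taking values in Ω with E[‖X‖] < ∞ and E[|φ(X)|] < ∞, and suppose E[X] ∈ Ω. Then for every u ∈ Ω the orthogonality principle holds: E[ℓ_φ(X,u)] = E[ℓ_φ(X, E[X])] + ℓ_φ(E[X], u). -/
/-! `ℓ_φ(·, v)` is affine up to the term `φ`, so its mean only sees `E[φ(X)]` and `E[X]`;
subtracting the formula at `v = E[X]` from the one at `v = u` leaves exactly `ℓ_φ(E[X], u)`. -/

open MeasureTheory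

/-- The Bregman divergence associated with a differentiable function `φ` on
`EuclideanSpace ℝ (Fin n)`: `ℓ_φ(u,v) = φ(u) − φ(v) − ⟨u − v, ∇φ(v)⟩`. -/
noncomputable def bregmanDiv {n : ℕ} (φ : EuclideanSpace ℝ (Fin n) → ℝ)
    (u v : EuclideanSpace ℝ (Fin n)) : ℝ :=
  φ u - φ v - (inner ℝ (u - v) (gradient φ v) : ℝ)

section

variable {E : Type*} [NormedAddCommGroup E] [InnerProductSpace ℝ E] [CompleteSpace E]
  {α : Type*} [MeasurableSpace α] {μ : Measure α} [IsProbabilityMeasure μ]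

theorem integral_inner_sub_const {X : α → E} (hX : Integrable X μ) (v w : E) :
    ∫ ω, inner ℝ (X ω - v) w ∂μ = inner ℝ ((∫ ω, X ω ∂μ) - v) w := by
  have hXv : Integrable (fun ω => X ω - v) μ := hX.sub (integrable_const v)
  simp_rw [real_inner_comm w]
  rw [integral_inner hXv, integral_sub hX (integrable_const v), integral_const, probReal_univ,
    one_smul]

end

theorem integral_bregmanDiv_left {n : ℕ} {α : Type*} [MeasurableSpace α] {μ : Measure α}
    [IsProbabilityMeasure μ] {φ : EuclideanSpace ℝ (Fin n) → ℝ}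
    {X : α → EuclideanSpace ℝ (Fin n)} (hX : Integrable X μ)
    (hφX : Integrable (fun ω => φ (X ω)) μ) (v : EuclideanSpace ℝ (Fin n)) :
    ∫ ω, bregmanDiv φ (X ω) v ∂μ
      = (∫ ω, φ (X ω) ∂μ) - φ v - inner ℝ ((∫ ω, X ω ∂μ) - v) (gradient φ v) := by
  have hφXv : Integrable (fun ω => φ (X ω) - φ v) μ := hφX.sub (integrable_const _)
  have hinner : Integrable (fun ω => inner ℝ (X ω - v) (gradient φ v)) μ :=
    (hX.sub (integrable_const v)).inner_const _
  unfold bregmanDiv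
  rw [integral_sub hφXv hinner, integral_sub hφX (integrable_const _), integral_const,
    probReal_univ, one_smul, integral_inner_sub_const hX]

theorem bregman_orthogonality_principle_general {n : ℕ}
    {α : Type*} [MeasurableSpace α] (μ : Measure α) [IsProbabilityMeasure μ]
    (Ω : Set (EuclideanSpace ℝ (Fin n)))
    (φ : EuclideanSpace ℝ (Fin n) → ℝ)
    (X : α → EuclideanSpace ℝ (Fin n))
    (hXint : Integrable X μ)
    (hφXint : Integrable (fun ω => φ (X ω)) μ) :
    ∀ u ∈ Ω,
      ∫ ω, bregmanDiv φ (X ω) u ∂μ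
        = (∫ ω, bregmanDiv φ (X ω) (∫ ω', X ω' ∂μ) ∂μ)
          + bregmanDiv φ (∫ ω, X ω ∂μ) u := by
  intro u _
  rw [integral_bregmanDiv_left hXint hφXint, integral_bregmanDiv_left hXint hφXint]
  simp only [bregmanDiv, sub_self, inner_zero_left]
  ring

theorem bregman_orthogonality_principle {n : ℕ}
    {α : Type*} [MeasurableSpace α] (μ : Measure α) [IsProbabilityMeasure μ]
    (Ω : Set (EuclideanSpace ℝ (Fin n))) (hΩ : Convex ℝ Ω)
    (φ : EuclideanSpace ℝ (Fin n) → ℝ)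
    (U : Set (EuclideanSpace ℝ (Fin n))) (hU : IsOpen U) (hΩU : Ω ⊆ U)
    (hφ : ContDiffOn ℝ 1 φ U) (hconv : StrictConvexOn ℝ Ω φ)
    (X : α → EuclideanSpace ℝ (Fin n)) (hX : Measurable X)
    (hXΩ : ∀ᵐ ω ∂μ, X ω ∈ Ω)
    (hXint : Integrable X μ)
    (hφXint : Integrable (fun ω => φ (X ω)) μ)
    (hmean : (∫ ω, X ω ∂μ) ∈ Ω) :
    ∀ u ∈ Ω,
      ∫ ω, bregmanDiv φ (X ω) u ∂μ
        = (∫ ω, bregmanDiv φ (X ω) (∫ ω', X ω' ∂μ) ∂μ)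
          + bregmanDiv φ (∫ ω, X ω ∂μ) u :=
  bregman_orthogonality_principle_general μ Ω φ X hXint hφXint
end

section
/- Let Θ be a real random variable and let Y be a random variable taking values in ℕ ∪ {0} whose conditional probability mass function given Θ = θ is P_{Y|Θ}(y|θ) = h(y) e^{yθ − ψ(θ)}, where h : ℕ ∪ {0} → (0,∞) and ψ(θ) = log Σ_y h(y) e^{yθ} < ∞. Let X = e^{Θ} and suppose E[X] < ∞. Then for every y with P_Y(y) > 0 and P_Y(y+1.) well defined, Tweedie's formula holds: E[X | Y = y] = (h(y)/h(y+1)) · (P_Y(y+1)/P_Y(y)), where P_Y(y) = E[P_{Y|Θ}(y|Θ)] is the marginal probability mass function of Y. -/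
open MeasureTheory Real

theorem tweedie_exponential_family
    {α : Type*} [MeasurableSpace α] (μ : Measure α) [IsProbabilityMeasure μ]
    (Θ : α → ℝ) (hΘ : Measurable Θ)
    (Y : α → ℕ) (hY : Measurable Y)
    (h : ℕ → ℝ) (hh : ∀ y, 0 < h y)
    (ψ : ℝ → ℝ)
    (hψ : ∀ θ : ℝ, HasSum (fun y : ℕ => h y * Real.exp (y * θ)) (Real.exp (ψ θ)))
    -- the conditional pmf of Y given Θ = θ is h(y) e^{yθ − ψ(θ)}
    (hcond : ∀ (y : ℕ) (s : Set ℝ), MeasurableSet s →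
      μ (Y ⁻¹' {y} ∩ Θ ⁻¹' s)
        = ENNReal.ofReal (∫ ω in Θ ⁻¹' s, h y * Real.exp (y * Θ ω - ψ (Θ ω)) ∂μ))
    -- X = e^Θ with E[X] < ∞
    (hXint : Integrable (fun ω => Real.exp (Θ ω)) μ) :
    ∀ y : ℕ, 0 < (μ (Y ⁻¹' {y})).toReal →
      (∫ ω in Y ⁻¹' {y}, Real.exp (Θ ω) ∂μ) / (μ (Y ⁻¹' {y})).toReal
        = (h y / h (y + 1)) * ((μ (Y ⁻¹' {y + 1})).toReal / (μ (Y ⁻¹' {y})).toReal) := by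
  -- ψ is measurable
  have hψexp_meas : Measurable (fun θ : ℝ => Real.exp (ψ θ)) := by
    have h1 : (fun θ : ℝ => ENNReal.ofReal (Real.exp (ψ θ)))
        = fun θ => ∑' y : ℕ, ENNReal.ofReal (h y * Real.exp (y * θ)) := by
      funext θ
      rw [← (hψ θ).tsum_eq, ENNReal.ofReal_tsum_of_nonneg
        (fun y => le_of_lt (mul_pos (hh y) (Real.exp_pos _))) (hψ θ).summable]
    have h2 : Measurable (fun θ : ℝ => ENNReal.ofReal (Real.exp (ψ θ))) := by
      rw [h1]
      exact Measurable.ennreal_tsum fun y =>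
        (((measurable_const.mul measurable_id).exp).const_mul (h y)).ennreal_ofReal
    have h3 : (fun θ : ℝ => Real.exp (ψ θ))
        = fun θ => (ENNReal.ofReal (Real.exp (ψ θ))).toReal := by
      funext θ; rw [ENNReal.toReal_ofReal (Real.exp_pos _).le]
    rw [h3]
    exact h2.ennreal_toReal
  have hψ_meas : Measurable ψ := by
    have : ψ = fun θ => Real.log (Real.exp (ψ θ)) := by
      funext θ; rw [Real.log_exp]
    rw [this]; exact hψexp_meas.log
  -- the densities g_k
  set g : ℕ → α → ℝ := fun k ω => h k * Real.exp (k * Θ ω - ψ (Θ ω)) with hg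
  have hg_meas : ∀ k : ℕ, Measurable (g k) := fun k =>
    (((measurable_const.mul hΘ).sub (hψ_meas.comp hΘ)).exp).const_mul (h k)
  have hg_nonneg : ∀ k ω, 0 ≤ g k ω := fun k ω =>
    le_of_lt (mul_pos (hh k) (Real.exp_pos _))
  have hg_le_one : ∀ k ω, g k ω ≤ 1 := by
    intro k ω
    have hsum := hψ (Θ ω)
    have hle : h k * Real.exp (k * Θ ω) ≤ Real.exp (ψ (Θ ω)) :=
      le_hasSum hsum k fun j _ => le_of_lt (mul_pos (hh j) (Real.exp_pos _))
    have : g k ω = h k * Real.exp (k * Θ ω) / Real.exp (ψ (Θ ω)) := by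
      rw [hg]; simp only
      rw [Real.exp_sub]; ring
    rw [this, div_le_one (Real.exp_pos _)]
    exact hle
  have hg_int : ∀ k : ℕ, Integrable (g k) μ := by
    intro k
    refine Integrable.mono' (integrable_const 1) (hg_meas k).aestronglyMeasurable ?_
    filter_upwards with ω
    rw [Real.norm_eq_abs, abs_of_nonneg (hg_nonneg k ω)]
    exact hg_le_one k ω
  -- measures agree after mapping by Θ
  have hmap : ∀ k : ℕ, (μ.restrict (Y ⁻¹' {k})).map Θ
      = (μ.withDensity (fun ω => ENNReal.ofReal (g k ω))).map Θ := by
    intro k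
    ext s hs
    rw [Measure.map_apply hΘ hs, Measure.map_apply hΘ hs,
      Measure.restrict_apply (hΘ hs), withDensity_apply _ (hΘ hs)]
    rw [Set.inter_comm, hcond k s hs]
    rw [MeasureTheory.ofReal_integral_eq_lintegral_ofReal ((hg_int k).restrict)
      (Filter.Eventually.of_forall (hg_nonneg k))]
  -- key integral identity
  have hkey : ∀ k : ℕ, (∫ ω in Y ⁻¹' {k}, Real.exp (Θ ω) ∂μ)
      = ∫ ω, g k ω * Real.exp (Θ ω) ∂μ := by
    intro k
    have hmeas_exp : Measurable fun x : ℝ => ENNReal.ofReal (Real.exp x) :=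
      measurable_exp.ennreal_ofReal
    have hl : ∫⁻ ω in Y ⁻¹' {k}, ENNReal.ofReal (Real.exp (Θ ω)) ∂μ
        = ∫⁻ ω, ENNReal.ofReal (g k ω) * ENNReal.ofReal (Real.exp (Θ ω)) ∂μ := by
      calc ∫⁻ ω in Y ⁻¹' {k}, ENNReal.ofReal (Real.exp (Θ ω)) ∂μ
          = ∫⁻ x, ENNReal.ofReal (Real.exp x) ∂((μ.restrict (Y ⁻¹' {k})).map Θ) := by
            rw [lintegral_map hmeas_exp hΘ]
        _ = ∫⁻ x, ENNReal.ofReal (Real.exp x)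
              ∂((μ.withDensity (fun ω => ENNReal.ofReal (g k ω))).map Θ) := by rw [hmap k]
        _ = ∫⁻ ω, ENNReal.ofReal (Real.exp (Θ ω))
              ∂(μ.withDensity (fun ω => ENNReal.ofReal (g k ω))) := by
            rw [lintegral_map hmeas_exp hΘ]
        _ = ∫⁻ ω, ENNReal.ofReal (g k ω) * ENNReal.ofReal (Real.exp (Θ ω)) ∂μ := by
            rw [lintegral_withDensity_eq_lintegral_mul _
              ((hg_meas k).ennreal_ofReal) (hΘ.exp.ennreal_ofReal)]
            rfl
    have hint2 : Integrable (fun ω => g k ω * Real.exp (Θ ω)) μ := by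
      refine Integrable.mono' hXint
        (((hg_meas k).mul (hΘ.exp)).aestronglyMeasurable) ?_
      filter_upwards with ω
      rw [Real.norm_eq_abs, abs_of_nonneg (mul_nonneg (hg_nonneg k ω) (Real.exp_pos _).le)]
      calc g k ω * Real.exp (Θ ω) ≤ 1 * Real.exp (Θ ω) := by
            exact mul_le_mul_of_nonneg_right (hg_le_one k ω) (Real.exp_pos _).le
        _ = Real.exp (Θ ω) := one_mul _
    have e1 : (∫ ω in Y ⁻¹' {k}, Real.exp (Θ ω) ∂μ)
        = (∫⁻ ω in Y ⁻¹' {k}, ENNReal.ofReal (Real.exp (Θ ω)) ∂μ).toReal := by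
      rw [integral_eq_lintegral_of_nonneg_ae
        (Filter.Eventually.of_forall fun ω => (Real.exp_pos _).le)
        ((hΘ.exp).aestronglyMeasurable.restrict)]
    have e2 : (∫ ω, g k ω * Real.exp (Θ ω) ∂μ)
        = (∫⁻ ω, ENNReal.ofReal (g k ω) * ENNReal.ofReal (Real.exp (Θ ω)) ∂μ).toReal := by
      rw [integral_eq_lintegral_of_nonneg_ae
        (Filter.Eventually.of_forall fun ω =>
          mul_nonneg (hg_nonneg k ω) (Real.exp_pos _).le)
        (((hg_meas k).mul (hΘ.exp)).aestronglyMeasurable)]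
      congr 1
      apply lintegral_congr
      intro ω
      rw [ENNReal.ofReal_mul (hg_nonneg k ω)]
    rw [e1, e2, hl]
  -- marginal mass as integral of density
  have hmass : ∀ k : ℕ, (μ (Y ⁻¹' {k})).toReal = ∫ ω, g k ω ∂μ := by
    intro k
    have := hcond k Set.univ MeasurableSet.univ
    simp only [Set.preimage_univ, Set.inter_univ, Measure.restrict_univ] at this
    rw [this, ENNReal.toReal_ofReal (integral_nonneg (hg_nonneg k))]
  intro y hy
  -- relate g (y+1) to exp(Θ) * g y
  have hstep : (fun ω => g (y + 1) ω) = fun ω => (h (y + 1) / h y) * (g y ω * Real.exp (Θ ω)) := by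
    funext ω
    rw [hg]; simp only
    have hc : ((y + 1 : ℕ) : ℝ) * Θ ω - ψ (Θ ω) = ((y : ℝ) * Θ ω - ψ (Θ ω)) + Θ ω := by
      push_cast; ring
    rw [hc, Real.exp_add]
    field_simp [(hh y).ne']
  have hmass' : (μ (Y ⁻¹' {y + 1})).toReal
      = (h (y + 1) / h y) * ∫ ω, g y ω * Real.exp (Θ ω) ∂μ := by
    rw [hmass (y + 1)]
    calc ∫ ω, g (y + 1) ω ∂μ
        = ∫ ω, (h (y + 1) / h y) * (g y ω * Real.exp (Θ ω)) ∂μ := by rw [hstep]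
      _ = (h (y + 1) / h y) * ∫ ω, g y ω * Real.exp (Θ ω) ∂μ := integral_const_mul _ _
  rw [hkey y, hmass']
  have hy0 : (h y) ≠ 0 := (hh y).ne'
  have hy1 : (h (y + 1)) ≠ 0 := (hh (y + 1)).ne'
  field_simp
end

section
/- Let X be a nonnegative real random variable with E[X] < ∞, and let Y be a random variable taking values in ℕ ∪ {0} whose conditional distribution given X = x is Poisson with mean x, i.e., P_{Y|X}(y|x) = x^y e^{−x} / y!. Then for every y ∈ ℕ ∪ {0} with P_Y(y) > 0, E[X | Y = y] = (y+1) P_Y(y+1) / P_Y(y), where P_Y(y) = E[P_{Y|X}(y|X)] is the marginal probability mass function of Y. -/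
/-!
The Poisson hypothesis says that, seen through `X`, the measure `μ` restricted to `{Y = y}` is
`μ` with density `X ^ y e^{-X} / y!`. Hence `E[X; Y = y] = E[X · X ^ y e^{-X} / y!]`, and since
`x · x ^ y / y! = (y + 1) · x ^ (y + 1) / (y + 1)!` this is `(y + 1) P(Y = y + 1)`.
-/

open MeasureTheory Real

section ConditionalDensity

variable {α β E : Type*} [MeasurableSpace α] [MeasurableSpace β]
  [NormedAddCommGroup E] [NormedSpace ℝ E]
  {μ : Measure α} {X : α → β} {A : Set α} {ρ : α → ℝ}

theorem map_restrict_eq_map_withDensity (hX : Measurable X)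
    (hρ_int : Integrable ρ μ) (hρ_nn : ∀ ω, 0 ≤ ρ ω)
    (hA : ∀ s, MeasurableSet s → μ (A ∩ X ⁻¹' s) = ENNReal.ofReal (∫ ω in X ⁻¹' s, ρ ω ∂μ)) :
    (μ.restrict A).map X = (μ.withDensity fun ω => ENNReal.ofReal (ρ ω)).map X := by
  ext s hs
  rw [Measure.map_apply hX hs, Measure.map_apply hX hs, Measure.restrict_apply (hX hs),
    Set.inter_comm, hA s hs, withDensity_apply _ (hX hs),
    ofReal_integral_eq_lintegral_ofReal hρ_int.restrict (.of_forall hρ_nn)]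

theorem setIntegral_comp_eq_integral_smul (hX : Measurable X)
    (hρ : Measurable ρ) (hρ_int : Integrable ρ μ) (hρ_nn : ∀ ω, 0 ≤ ρ ω)
    (hA : ∀ s, MeasurableSet s → μ (A ∩ X ⁻¹' s) = ENNReal.ofReal (∫ ω in X ⁻¹' s, ρ ω ∂μ))
    {φ : β → E} (hφ : StronglyMeasurable φ) :
    ∫ ω in A, φ (X ω) ∂μ = ∫ ω, ρ ω • φ (X ω) ∂μ := by
  rw [← integral_map hX.aemeasurable hφ.aestronglyMeasurable,
    map_restrict_eq_map_withDensity hX hρ_int hρ_nn hA,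
    integral_map hX.aemeasurable hφ.aestronglyMeasurable,
    integral_withDensity_eq_integral_toReal_smul hρ.ennreal_ofReal
      (.of_forall fun _ => ENNReal.ofReal_lt_top)]
  simp only [ENNReal.toReal_ofReal (hρ_nn _)]

end ConditionalDensity

section PoissonWeight

open Nat

theorem pow_mul_exp_neg_div_factorial_le_one {x : ℝ} (hx : 0 ≤ x) (n : ℕ) :
    x ^ n * exp (-x) / n ! ≤ 1 :=
  calc x ^ n * exp (-x) / n ! = x ^ n / n ! * exp (-x) := by ring
    _ ≤ exp x * exp (-x) := by gcongr; exact pow_div_factorial_le_exp x hx n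
    _ = 1 := by rw [← exp_add, add_neg_cancel, exp_zero]

theorem mul_pow_mul_exp_neg_div_factorial (x : ℝ) (n : ℕ) :
    x * (x ^ n * exp (-x) / n !) = (n + 1) * (x ^ (n + 1) * exp (-x) / (n + 1) !) := by
  rw [factorial_succ]
  push_cast
  field_simp
  ring

theorem integrable_pow_mul_exp_neg_div_factorial {α : Type*} [MeasurableSpace α]
    {μ : Measure α} [IsFiniteMeasure μ] {X : α → ℝ} (hX : Measurable X) (hX_nn : ∀ ω, 0 ≤ X ω)
    (n : ℕ) : Integrable (fun ω => X ω ^ n * exp (-X ω) / n !) μ := by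
  refine (integrable_const 1).mono' (by fun_prop) (.of_forall fun ω => ?_)
  rw [norm_of_nonneg (by have := hX_nn ω; positivity)]
  exact pow_mul_exp_neg_div_factorial_le_one (hX_nn ω) n

end PoissonWeight

theorem tweedie_poisson_general
    {α : Type*} [MeasurableSpace α] (μ : Measure α) [IsProbabilityMeasure μ]
    (X : α → ℝ) (hX : Measurable X) (hXnn : ∀ ω, 0 ≤ X ω)
    (Y : α → ℕ)
    -- the conditional pmf of Y given X = x is Poisson with mean x
    (hcond : ∀ (y : ℕ) (s : Set ℝ), MeasurableSet s →
      μ (Y ⁻¹' {y} ∩ X ⁻¹' s)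
        = ENNReal.ofReal
            (∫ ω in X ⁻¹' s, (X ω) ^ y * Real.exp (-X ω) / (Nat.factorial y) ∂μ)) :
    ∀ y : ℕ, 0 < (μ (Y ⁻¹' {y})).toReal →
      (∫ ω in Y ⁻¹' {y}, X ω ∂μ) / (μ (Y ⁻¹' {y})).toReal
        = ((y : ℝ) + 1) * (μ (Y ⁻¹' {y + 1})).toReal / (μ (Y ⁻¹' {y})).toReal := by
  intro y _
  have hint := integrable_pow_mul_exp_neg_div_factorial (μ := μ) hX hXnn
  have hnum : ∫ ω in Y ⁻¹' {y}, X ω ∂μ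
      = ∫ ω, X ω ^ y * exp (-X ω) / y.factorial * X ω ∂μ :=
    setIntegral_comp_eq_integral_smul hX (by fun_prop) (hint y)
      (fun ω => by have := hXnn ω; positivity) (hcond y) stronglyMeasurable_id
  have hnext : (μ (Y ⁻¹' {y + 1})).toReal
      = ∫ ω, X ω ^ (y + 1) * exp (-X ω) / (y + 1).factorial ∂μ := by
    rw [← Set.inter_univ (Y ⁻¹' _), ← Set.preimage_univ (f := X),
      hcond (y + 1) _ MeasurableSet.univ, Set.preimage_univ, Measure.restrict_univ,
      ENNReal.toReal_ofReal (integral_nonneg fun ω => by have := hXnn ω; positivity)]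
  rw [hnum, hnext, ← integral_const_mul]
  congr 2
  ext ω
  rw [mul_comm, mul_pow_mul_exp_neg_div_factorial]

theorem tweedie_poisson
    {α : Type*} [MeasurableSpace α] (μ : Measure α) [IsProbabilityMeasure μ]
    (X : α → ℝ) (hX : Measurable X) (hXnn : ∀ ω, 0 ≤ X ω)
    (hXint : Integrable X μ)
    (Y : α → ℕ) (hY : Measurable Y)
    -- the conditional pmf of Y given X = x is Poisson with mean x
    (hcond : ∀ (y : ℕ) (s : Set ℝ), MeasurableSet s →
      μ (Y ⁻¹' {y} ∩ X ⁻¹' s)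
        = ENNReal.ofReal
            (∫ ω in X ⁻¹' s, (X ω) ^ y * Real.exp (-X ω) / (Nat.factorial y) ∂μ)) :
    ∀ y : ℕ, 0 < (μ (Y ⁻¹' {y})).toReal →
      (∫ ω in Y ⁻¹' {y}, X ω ∂μ) / (μ (Y ⁻¹' {y})).toReal
        = ((y : ℝ) + 1) * (μ (Y ⁻¹' {y + 1})).toReal / (μ (Y ⁻¹' {y})).toReal :=
  tweedie_poisson_general μ X hX hXnn Y hcond
end

section
/- Let Ω be a complete separable metric space and let L : 𝒫(Ω) → ℝ be a linear functional on the set of Borel probability measures on Ω, i.e., L(αP + (1−α)Q) = αL(P) + (1−α)L(Q) for all P, Q ∈ 𝒫(Ω) and α ∈ [0,1]. Then L is continuous with respect to the topology of weak convergence if and only if there exists a bounded continuous function ψ : Ω → ℝ such that L(P) = ∫ ψ dP for all P ∈ 𝒫(Ω). -/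
open MeasureTheory NNReal ENNReal Filter Topology

section wclaux
variable {Ω : Type*} [MeasurableSpace Ω]

lemma WCL.smul_coe (a : ℝ≥0) (ν : Measure Ω) : a • ν = (a : ℝ≥0∞) • ν := by
  ext s hs
  rw [ENNReal.smul_def]

noncomputable def WCL.diracProb (x : Ω) : ProbabilityMeasure Ω :=
  ⟨Measure.dirac x, inferInstance⟩

@[simp] lemma WCL.diracProb_coe (x : Ω) :
    (WCL.diracProb x : Measure Ω) = Measure.dirac x := rfl

noncomputable def WCL.probMap (P : Measure Ω)
    [IsProbabilityMeasure P] (f : Ω → Ω) (hf : Measurable f) : ProbabilityMeasure Ω :=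
  ⟨P.map f, Measure.isProbabilityMeasure_map hf.aemeasurable⟩

@[simp] lemma WCL.probMap_coe (P : Measure Ω) [IsProbabilityMeasure P] (f : Ω → Ω)
    (hf : Measurable f) : (WCL.probMap P f hf : Measure Ω) = P.map f := rfl

lemma WCL.finite_combo (L : ProbabilityMeasure Ω → ℝ)
    (hlin : ∀ (P Q R : ProbabilityMeasure Ω) (α : ℝ≥0), α ≤ 1 →
      (R : Measure Ω) = α • (P : Measure Ω) + (1 - α) • (Q : Measure Ω) →
      L R = (α : ℝ) * L P + (1 - (α : ℝ)) * L Q)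
    {ι : Type*} (s : Finset ι) :
    ∀ (w : ι → ℝ≥0) (μ : ι → ProbabilityMeasure Ω), (∑ i ∈ s, w i) = 1 →
      ∀ R : ProbabilityMeasure Ω, (R : Measure Ω) = ∑ i ∈ s, (w i) • (μ i : Measure Ω) →
      L R = ∑ i ∈ s, (w i : ℝ) * L (μ i) := by
  classical
  induction s using Finset.induction_on with
  | empty => intro w μ hw; simp at hw
  | @insert a t ha ih =>
    intro w μ hw R hR
    rw [Finset.sum_insert ha] at hw hR
    rw [Finset.sum_insert ha]
    set α := w a with hαdef
    have hα1 : α ≤ 1 := by rw [← hw]; exact le_self_add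
    by_cases hα : α = 1
    · have h0 : ∑ i ∈ t, w i = 0 := by
        have : α + ∑ i ∈ t, w i = α + 0 := by rw [add_zero, hw, hα]
        exact add_left_cancel this
      have hz : ∀ i ∈ t, w i = 0 := fun i hi => (Finset.sum_eq_zero_iff.mp h0) i hi
      have hRμ : (R : Measure Ω) = (μ a : Measure Ω) := by
        rw [hR, hα, one_smul, Finset.sum_eq_zero (fun i hi => by rw [hz i hi, zero_smul]),
          add_zero]
      have : R = μ a := ProbabilityMeasure.toMeasure_injective hRμ
      rw [this, hα, Finset.sum_eq_zero (fun i hi => by rw [hz i hi]; simp)]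
      simp
    · set β : ℝ≥0 := 1 - α with hβdef
      have hβ0 : β ≠ 0 := by
        intro h
        exact hα (le_antisymm hα1 (tsub_eq_zero_iff_le.mp h))
      have hsumt : ∑ i ∈ t, w i = β := by
        have h1 : α + ∑ i ∈ t, w i = α + β := by
          rw [hw, hβdef, add_tsub_cancel_of_le hα1]
        exact add_left_cancel h1
      have hsum' : ∑ i ∈ t, w i / β = 1 := by
        rw [← Finset.sum_div, hsumt, div_self hβ0]
      set ν : Measure Ω := ∑ i ∈ t, (w i / β) • (μ i : Measure Ω) with hνdef
      have hνprob : IsProbabilityMeasure ν := by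
        constructor
        rw [hνdef, Measure.finset_sum_apply]
        simp only [Measure.smul_apply, measure_univ, smul_eq_mul, mul_one, ENNReal.smul_def]
        rw [← ENNReal.coe_finset_sum, hsum', ENNReal.coe_one]
      set Q : ProbabilityMeasure Ω := ⟨ν, hνprob⟩ with hQdef
      have hRd : (R : Measure Ω) = α • (μ a : Measure Ω) + (1 - α) • (Q : Measure Ω) := by
        rw [hR]
        congr 1
        rw [hQdef]
        show _ = (1 - α) • ν
        rw [hνdef, Finset.smul_sum]
        refine Finset.sum_congr rfl (fun i hi => ?_)
        rw [smul_smul, ← hβdef, mul_div_cancel₀ _ hβ0]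
      have hLQ : L Q = ∑ i ∈ t, ((w i / β : ℝ≥0) : ℝ) * L (μ i) :=
        ih (fun i => w i / β) μ hsum' Q rfl
      rw [hlin (μ a) Q R α hα1 hRd, hLQ]
      congr 1
      have hβc : (1 : ℝ) - (α : ℝ) = (β : ℝ) := by
        rw [hβdef, NNReal.coe_sub hα1, NNReal.coe_one]
      rw [hβc, Finset.mul_sum]
      refine Finset.sum_congr rfl (fun i hi => ?_)
      rw [← mul_assoc, NNReal.coe_div, mul_div_cancel₀]
      exact_mod_cast hβ0

lemma WCL.map_discrete {β : Type*} [Fintype β] [MeasurableSpace β] [MeasurableSingletonClass β]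
    (μ : Measure Ω) (j : Ω → β) (hj : Measurable j) (z : β → Ω) (hz : Measurable z) :
    μ.map (z ∘ j) = ∑ b : β, μ (j ⁻¹' {b}) • Measure.dirac (z b) := by
  classical
  ext s hs
  rw [Measure.map_apply (hz.comp hj) hs, Measure.finset_sum_apply]
  have hterm : ∀ b : β, (μ (j ⁻¹' {b}) • Measure.dirac (z b)) s
      = if z b ∈ s then μ (j ⁻¹' {b}) else 0 := by
    intro b
    rw [Measure.smul_apply, Measure.dirac_apply' _ hs, Set.indicator_apply]
    split_ifs <;> simp
  rw [Finset.sum_congr rfl (fun b _ => hterm b), ← Finset.sum_filter,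
    sum_measure_preimage_singleton _ (fun b _ => hj (measurableSet_singleton b))]
  congr 1
  ext x
  simp [Set.mem_preimage]

lemma WCL.integral_map_discrete [TopologicalSpace Ω] [OpensMeasurableSpace Ω]
    [MeasurableSingletonClass Ω]
    {β : Type*} [Fintype β] [MeasurableSpace β] [MeasurableSingletonClass β]
    (μ : Measure Ω) [IsProbabilityMeasure μ]
    (j : Ω → β) (hj : Measurable j) (z : β → Ω) (hz : Measurable z)
    (ψ : BoundedContinuousFunction Ω ℝ) :
    ∫ x, ψ x ∂(μ.map (z ∘ j)) = ∑ b : β, (μ (j ⁻¹' {b})).toReal * ψ (z b) := by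
  rw [WCL.map_discrete μ j hj z hz]
  have hint : ∀ b ∈ Finset.univ (α := β),
      Integrable (fun x => ψ x) (μ (j ⁻¹' {b}) • Measure.dirac (z b)) := by
    intro b _
    refine Integrable.smul_measure (ψ.integrable _) ?_
    exact (measure_lt_top μ _).ne
  rw [integral_finset_sum_measure hint]
  refine Finset.sum_congr rfl (fun b _ => ?_)
  rw [integral_smul_measure, integral_dirac, smul_eq_mul]

end wclaux

section wclaux2
variable {Ω : Type*} [MetricSpace Ω] [MeasurableSpace Ω] [OpensMeasurableSpace Ω]

lemma WCL.measurable_idx (u : ℕ → Ω) {ε : ℝ} (hex : ∀ x : Ω, ∃ k, dist x (u k) < ε) :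
    Measurable (fun x => Nat.find (hex x)) := by
  apply measurable_to_countable'
  intro m
  have hset : (fun x => Nat.find (hex x)) ⁻¹' {m} =
      Metric.ball (u m) ε \ ⋃ j ∈ Set.Iio m, Metric.ball (u j) ε := by
    ext x
    simp only [Set.mem_preimage, Set.mem_singleton_iff, Nat.find_eq_iff (hex x),
      Set.mem_diff, Metric.mem_ball, Set.mem_iUnion, Set.mem_Iio, not_exists,
      exists_prop, not_and, dist_comm]
  rw [hset]
  exact measurableSet_ball.diff
    (MeasurableSet.biUnion (Set.to_countable _) (fun j _ => measurableSet_ball))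

lemma WCL.continuous_diracProb :
    Continuous (fun x : Ω => WCL.diracProb x) := by
  rw [continuous_iff_continuousAt]
  intro x
  show Tendsto _ (𝓝 x) (𝓝 (WCL.diracProb x))
  refine (ProbabilityMeasure.tendsto_iff_forall_integral_tendsto
    (μs := fun x : Ω => WCL.diracProb x)
    (μ := WCL.diracProb x) (F := 𝓝 x)).mpr (fun g => ?_)
  simp only [WCL.diracProb, ProbabilityMeasure.coe_mk, integral_dirac]
  exact g.continuous.tendsto x

lemma WCL.tendsto_map (P : Measure Ω) [IsProbabilityMeasure P] {fs : ℕ → Ω → Ω} {flim : Ω → Ω}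
    (hfs : ∀ n, Measurable (fs n)) (hflim : Measurable flim)
    (hptw : ∀ x, Tendsto (fun n => fs n x) atTop (𝓝 (flim x))) :
    Tendsto (fun n => WCL.probMap P (fs n) (hfs n)) atTop (𝓝 (WCL.probMap P flim hflim)) := by
  refine (ProbabilityMeasure.tendsto_iff_forall_integral_tendsto
    (μs := fun n => WCL.probMap P (fs n) (hfs n))
    (μ := WCL.probMap P flim hflim) (F := atTop)).mpr (fun g => ?_)
  simp only [WCL.probMap, ProbabilityMeasure.coe_mk]
  have h1 : ∀ n, ∫ x, g x ∂(P.map (fs n)) = ∫ x, g (fs n x) ∂P := fun n =>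
    integral_map (hfs n).aemeasurable g.continuous.measurable.aestronglyMeasurable
  have h2 : ∫ x, g x ∂(P.map flim) = ∫ x, g (flim x) ∂P :=
    integral_map hflim.aemeasurable g.continuous.measurable.aestronglyMeasurable
  simp_rw [h1, h2]
  apply tendsto_integral_of_dominated_convergence (fun _ => ‖g‖)
  · exact fun n => (g.continuous.measurable.comp (hfs n)).aestronglyMeasurable
  · exact integrable_const _
  · exact fun n => Eventually.of_forall (fun x => g.norm_coe_le_norm _)
  · exact Eventually.of_forall (fun x => (g.continuous.tendsto _).comp (hptw x))

lemma WCL.key (L : ProbabilityMeasure Ω → ℝ)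
    (hlin : ∀ (P Q R : ProbabilityMeasure Ω) (α : ℝ≥0), α ≤ 1 →
      (R : Measure Ω) = α • (P : Measure Ω) + (1 - α) • (Q : Measure Ω) →
      L R = (α : ℝ) * L P + (1 - (α : ℝ)) * L Q)
    (ψ : BoundedContinuousFunction Ω ℝ) (hψ : ∀ x, ψ x = L (WCL.diracProb x))
    {β : Type*} [Fintype β] [MeasurableSpace β] [MeasurableSingletonClass β]
    (μ : Measure Ω) [IsProbabilityMeasure μ]
    (j : Ω → β) (hj : Measurable j) (z : β → Ω) (hz : Measurable z) :
    L (WCL.probMap μ (z ∘ j) (hz.comp hj)) =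
      ∫ x, ψ x ∂((WCL.probMap μ (z ∘ j) (hz.comp hj) : Measure Ω)) := by
  classical
  set w : β → ℝ≥0 := fun b => (μ (j ⁻¹' {b})).toNNReal with hw
  have hne : ∀ b : β, μ (j ⁻¹' {b}) ≠ ⊤ := fun b => (measure_lt_top μ _).ne
  have hsum_top : ∑ b : β, μ (j ⁻¹' {b}) = 1 := by
    rw [sum_measure_preimage_singleton _ (fun b _ => hj (measurableSet_singleton b))]
    simp
  have hsum : ∑ b : β, w b = 1 := by
    have h : ((∑ b : β, w b : ℝ≥0) : ℝ≥0∞) = ((1 : ℝ≥0) : ℝ≥0∞) := by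
      rw [ENNReal.coe_finset_sum]
      simp only [hw, ENNReal.coe_toNNReal (hne _)]
      rw [hsum_top, ENNReal.coe_one]
    exact_mod_cast h
  have hdecomp : (WCL.probMap μ (z ∘ j) (hz.comp hj) : Measure Ω) =
      ∑ b : β, (w b) • ((WCL.diracProb (z b) : Measure Ω)) := by
    rw [WCL.probMap_coe, WCL.map_discrete μ j hj z hz]
    refine Finset.sum_congr rfl (fun b _ => ?_)
    rw [WCL.smul_coe, WCL.diracProb_coe, hw]
    rw [ENNReal.coe_toNNReal (hne b)]
  have hLval := WCL.finite_combo L hlin Finset.univ w (fun b => WCL.diracProb (z b)) hsum _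
    hdecomp
  rw [hLval, WCL.probMap_coe, WCL.integral_map_discrete μ j hj z hz ψ]
  refine Finset.sum_congr rfl (fun b _ => ?_)
  rw [hψ (z b)]
  rfl

end wclaux2

open MeasureTheory NNReal

theorem weak_continuity_of_linear_functionals
    {Ω : Type*} [MetricSpace Ω] [CompleteSpace Ω] [TopologicalSpace.SeparableSpace Ω]
    [MeasurableSpace Ω] [BorelSpace Ω]
    (L : ProbabilityMeasure Ω → ℝ)
    -- linearity: L(αP + (1−α)Q) = αL(P) + (1−α)L(Q)
    (hlin : ∀ (P Q R : ProbabilityMeasure Ω) (α : ℝ≥0), α ≤ 1 →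
      (R : Measure Ω) = α • (P : Measure Ω) + (1 - α) • (Q : Measure Ω) →
      L R = (α : ℝ) * L P + (1 - (α : ℝ)) * L Q) :
    Continuous L ↔
      ∃ ψ : BoundedContinuousFunction Ω ℝ,
        ∀ P : ProbabilityMeasure Ω, L P = ∫ x, ψ x ∂(P : Measure Ω) := by
  constructor
  · intro hL
    rcases isEmpty_or_nonempty Ω with hΩ | hΩ
    · refine ⟨0, fun P => ?_⟩
      exfalso
      have h1 : (P : Measure Ω) Set.univ = 1 := measure_univ
      rw [Set.univ_eq_empty_iff.mpr hΩ, measure_empty] at h1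
      exact zero_ne_one h1
    · obtain ⟨u, hu⟩ := TopologicalSpace.exists_dense_seq Ω
      have hex : ∀ (n : ℕ) (x : Ω), ∃ k, dist x (u k) < 1 / (n + 1) := fun n x =>
        hu.exists_dist_lt x (by positivity)
      set ψ0 : Ω → ℝ := fun x => L (WCL.diracProb x) with hψ0
      have hψcont : Continuous ψ0 := hL.comp WCL.continuous_diracProb
      -- boundedness of ψ0
      obtain ⟨C, hC⟩ : ∃ C, ∀ x, |ψ0 x| ≤ C := by
        by_contra hcon
        push_neg at hcon
        set B := |ψ0 (u 0)| with hB
        have hBnn : 0 ≤ B := abs_nonneg _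
        choose xs hxs using fun n : ℕ =>
          hcon (((n : ℝ) + 1) * ((n : ℝ) + 2 + 2 * B))
        set α : ℕ → ℝ≥0 := fun n => ((n : ℝ≥0) + 1)⁻¹ with hα
        have hαle : ∀ n, α n ≤ 1 := by
          intro n
          show ((n : ℝ≥0) + 1)⁻¹ ≤ 1
          exact inv_le_one_of_one_le₀ le_add_self
        have hprob : ∀ n, IsProbabilityMeasure
            ((α n) • Measure.dirac (xs n) + (1 - α n) • Measure.dirac (u 0)) := by
          intro n
          constructor
          simp only [Measure.coe_add, Pi.add_apply, Measure.smul_apply, measure_univ,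
            ENNReal.smul_def, smul_eq_mul, mul_one]
          rw [← ENNReal.coe_add, add_tsub_cancel_of_le (hαle n), ENNReal.coe_one]
        set R : ℕ → ProbabilityMeasure Ω := fun n => ⟨_, hprob n⟩ with hR
        have hLR : ∀ n, L (R n) = (α n : ℝ) * ψ0 (xs n) + (1 - (α n : ℝ)) * ψ0 (u 0) := by
          intro n
          exact hlin (WCL.diracProb (xs n)) (WCL.diracProb (u 0)) (R n) (α n) (hαle n) rfl
        have hαreal : ∀ n : ℕ, ((α n : ℝ≥0) : ℝ) = ((n : ℝ) + 1)⁻¹ := by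
          intro n
          rw [hα]
          push_cast
          ring
        have hα0 : Tendsto (fun n => ((α n : ℝ≥0) : ℝ)) atTop (𝓝 0) := by
          simp only [hαreal]
          simpa only [one_div] using tendsto_one_div_add_atTop_nhds_zero_nat (𝕜 := ℝ)
        have hRtend : Tendsto R atTop (𝓝 (WCL.diracProb (u 0))) := by
          refine (ProbabilityMeasure.tendsto_iff_forall_integral_tendsto
            (μs := R) (μ := WCL.diracProb (u 0)) (F := atTop)).mpr (fun g => ?_)
          have hval : ∀ n, ∫ x, g x ∂((R n : Measure Ω)) =
              (α n : ℝ) * g (xs n) + (1 - (α n : ℝ)) * g (u 0) := by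
            intro n
            show ∫ x, g x ∂((α n) • Measure.dirac (xs n) + (1 - α n) • Measure.dirac (u 0)) = _
            rw [WCL.smul_coe, WCL.smul_coe,
              integral_add_measure ((g.integrable _).smul_measure ENNReal.coe_ne_top)
                ((g.integrable _).smul_measure ENNReal.coe_ne_top),
              integral_smul_measure, integral_smul_measure, integral_dirac, integral_dirac,
              ENNReal.coe_toReal, ENNReal.coe_toReal, smul_eq_mul, smul_eq_mul,
              NNReal.coe_sub (hαle n), NNReal.coe_one]
          simp only [hval, WCL.diracProb_coe, integral_dirac]
          have h1 : Tendsto (fun n => (α n : ℝ) * g (xs n)) atTop (𝓝 0) := by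
            have hbd : ∀ n, ‖(α n : ℝ) * g (xs n)‖ ≤ (α n : ℝ) * ‖g‖ := by
              intro n
              rw [norm_mul, Real.norm_eq_abs ((α n : ℝ≥0) : ℝ),
                abs_of_nonneg (α n).coe_nonneg]
              exact mul_le_mul_of_nonneg_left (g.norm_coe_le_norm _) (α n).coe_nonneg
            have hlim0 : Tendsto (fun n => (α n : ℝ) * ‖g‖) atTop (𝓝 0) := by
              simpa using hα0.mul (tendsto_const_nhds (x := ‖g‖))
            exact squeeze_zero_norm hbd hlim0
          have h2 : Tendsto (fun n => (1 - (α n : ℝ)) * g (u 0)) atTop (𝓝 (g (u 0))) := by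
            have := ((tendsto_const_nhds (x := (1:ℝ))).sub hα0).mul
              (tendsto_const_nhds (x := g (u 0)))
            simpa using this
          simpa using h1.add h2
        have htend : Tendsto (fun n => L (R n)) atTop (𝓝 (ψ0 (u 0))) :=
          (hL.tendsto _).comp hRtend
        obtain ⟨N, hN⟩ := Metric.tendsto_atTop.mp htend 1 one_pos
        have hdist := hN N le_rfl
        rw [Real.dist_eq, hLR N] at hdist
        -- arithmetic contradiction
        set a : ℝ := ((α N : ℝ≥0) : ℝ) with ha
        have hapos : 0 < a := by
          rw [ha, hαreal]
          positivity
        have hale : a ≤ 1 := by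
          rw [ha]
          exact_mod_cast hαle N
        set X := ψ0 (xs N) with hX
        set Y := ψ0 (u 0) with hY
        have habsX : ((N : ℝ) + 1) * ((N : ℝ) + 2 + 2 * B) < |X| := hxs N
        have hmul : a * (((N : ℝ) + 1) * ((N : ℝ) + 2 + 2 * B)) = (N : ℝ) + 2 + 2 * B := by
          rw [ha, hαreal, ← mul_assoc, inv_mul_cancel₀ (by positivity), one_mul]
        have haX : (N : ℝ) + 2 + 2 * B < a * |X| := by
          rw [← hmul]
          exact mul_lt_mul_of_pos_left habsX hapos
        set S := a * X + (1 - a) * Y with hS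
        have hS1 : |S - Y| < 1 := hdist
        have h3 : a * |X| ≤ |S| + |(1 - a) * Y| := by
          have heq : a * X = S - (1 - a) * Y := by rw [hS]; ring
          calc a * |X| = |a * X| := by rw [abs_mul, abs_of_pos hapos]
            _ = |S - (1 - a) * Y| := by rw [heq]
            _ ≤ |S| + |(1 - a) * Y| := abs_sub _ _
        have h4 : |(1 - a) * Y| ≤ B := by
          rw [abs_mul, abs_of_nonneg (by linarith : (0:ℝ) ≤ 1 - a), hB]
          nlinarith [abs_nonneg Y]
        have h5 : |S| ≤ |S - Y| + |Y| := by
          calc |S| = |(S - Y) + Y| := by rw [sub_add_cancel]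
            _ ≤ |S - Y| + |Y| := abs_add_le _ _
        have hNnn : (0:ℝ) ≤ (N : ℝ) := Nat.cast_nonneg N
        rw [← hB] at h5
        linarith
      -- the bounded continuous function
      set ψ : BoundedContinuousFunction Ω ℝ :=
        BoundedContinuousFunction.ofNormedAddCommGroup ψ0 hψcont C
          (fun x => by simpa [Real.norm_eq_abs] using hC x) with hψdef
      have hψval : ∀ x, ψ x = L (WCL.diracProb x) := fun x => rfl
      refine ⟨ψ, fun P => ?_⟩
      haveI : IsProbabilityMeasure (P : Measure Ω) := P.prop
      set μ : Measure Ω := (P : Measure Ω) with hμ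
      -- partition maps
      set k : ℕ → Ω → ℕ := fun n x => Nat.find (hex n x) with hk
      have hkmeas : ∀ n, Measurable (k n) := fun n => WCL.measurable_idx u (hex n)
      set f : ℕ → Ω → Ω := fun n x => u (k n x) with hf
      have hfmeas : ∀ n, Measurable (f n) := fun n => measurable_from_top.comp (hkmeas n)
      have hfdist : ∀ n x, dist x (f n x) < 1 / (n + 1) := fun n x => Nat.find_spec (hex n x)
      set zz : (m : ℕ) → Fin (m + 1) → Ω := fun m b => if (b : ℕ) < m then u b else u 0
        with hzz
      set jj : ℕ → (m : ℕ) → Ω → Fin (m + 1) := fun n m x =>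
        if h : k n x < m then ⟨k n x, h.trans (Nat.lt_succ_self m)⟩ else Fin.last m with hjj
      have hjjmeas : ∀ n m, Measurable (jj n m) := by
        intro n m
        have : jj n m = (fun i : ℕ =>
            if h : i < m then (⟨i, h.trans (Nat.lt_succ_self m)⟩ : Fin (m + 1))
            else Fin.last m) ∘ (k n) := rfl
        rw [this]
        exact measurable_from_top.comp (hkmeas n)
      have hzzmeas : ∀ m, Measurable (zz m) := fun m => measurable_from_top
      -- step A : L (probMap μ (f n)) = ∫ ψ d(probMap μ (f n))
      have stepA : ∀ n, L (WCL.probMap μ (f n) (hfmeas n)) =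
          ∫ x, ψ x ∂((WCL.probMap μ (f n) (hfmeas n) : Measure Ω)) := by
        intro n
        have hcomp : ∀ m, Measurable (zz m ∘ jj n m) := fun m =>
          (hzzmeas m).comp (hjjmeas n m)
        have hptw : ∀ x, Tendsto (fun m => (zz m ∘ jj n m) x) atTop (𝓝 (f n x)) := by
          intro x
          apply tendsto_const_nhds.congr'
          filter_upwards [eventually_ge_atTop (k n x + 1)] with m hm
          have hlt : k n x < m := hm
          simp only [Function.comp_apply, hjj, hzz, dif_pos hlt]
          rw [if_pos hlt]
        have hQtend : Tendsto (fun m => WCL.probMap μ (zz m ∘ jj n m) (hcomp m)) atTop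
            (𝓝 (WCL.probMap μ (f n) (hfmeas n))) :=
          WCL.tendsto_map μ hcomp (hfmeas n) hptw
        have hLlim : Tendsto (fun m => L (WCL.probMap μ (zz m ∘ jj n m) (hcomp m))) atTop
            (𝓝 (L (WCL.probMap μ (f n) (hfmeas n)))) := (hL.tendsto _).comp hQtend
        have hIlim : Tendsto (fun m => ∫ x, ψ x ∂((WCL.probMap μ (zz m ∘ jj n m) (hcomp m) :
            Measure Ω))) atTop
            (𝓝 (∫ x, ψ x ∂((WCL.probMap μ (f n) (hfmeas n) : Measure Ω)))) :=
          (ProbabilityMeasure.tendsto_iff_forall_integral_tendsto).mp hQtend ψ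
        have heach : ∀ m, L (WCL.probMap μ (zz m ∘ jj n m) (hcomp m)) =
            ∫ x, ψ x ∂((WCL.probMap μ (zz m ∘ jj n m) (hcomp m) : Measure Ω)) := by
          intro m
          exact WCL.key L hlin ψ hψval μ (jj n m) (hjjmeas n m) (zz m) (hzzmeas m)
        rw [funext heach] at hLlim
        exact tendsto_nhds_unique hLlim hIlim
      -- step B : conclude for P
      have hptw2 : ∀ x : Ω, Tendsto (fun n => f n x) atTop (𝓝 x) := by
        intro x
        rw [tendsto_iff_dist_tendsto_zero]
        have hbd : ∀ n : ℕ, dist (f n x) x ≤ 1 / ((n : ℝ) + 1) := by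
          intro n
          rw [dist_comm]
          exact (hfdist n x).le
        exact squeeze_zero (fun n => dist_nonneg) hbd
          tendsto_one_div_add_atTop_nhds_zero_nat
      have hPtend : Tendsto (fun n => WCL.probMap μ (f n) (hfmeas n)) atTop
          (𝓝 (WCL.probMap μ id measurable_id)) :=
        WCL.tendsto_map μ hfmeas measurable_id hptw2
      have hPid : WCL.probMap μ id measurable_id = P := by
        apply ProbabilityMeasure.toMeasure_injective
        rw [WCL.probMap_coe, Measure.map_id]
      rw [hPid] at hPtend
      have hLlim : Tendsto (fun n => L (WCL.probMap μ (f n) (hfmeas n))) atTop (𝓝 (L P)) :=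
        (hL.tendsto _).comp hPtend
      have hIlim : Tendsto (fun n => ∫ x, ψ x ∂((WCL.probMap μ (f n) (hfmeas n) : Measure Ω)))
          atTop (𝓝 (∫ x, ψ x ∂(P : Measure Ω))) :=
        (ProbabilityMeasure.tendsto_iff_forall_integral_tendsto).mp hPtend ψ
      rw [funext stepA] at hLlim
      exact tendsto_nhds_unique hLlim hIlim
  · rintro ⟨ψ, hψ⟩
    have hcont : Continuous (fun Q : ProbabilityMeasure Ω => ∫ x, ψ x ∂(Q : Measure Ω)) :=
      ProbabilityMeasure.continuous_integral_boundedContinuousFunction ψ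
    have hfun : L = fun Q : ProbabilityMeasure Ω => ∫ x, ψ x ∂(Q : Measure Ω) := funext hψ
    rw [hfun]
    exact hcont
end

section
/- The moment set ℋ_k is convex, and every extreme point of ℋ_k is a discrete probability measure of the form P = Σ_{i=1}^m α_i δ_{x_i} with x_i ∈ Ω, α_i ∈ [0,1], Σ_{i=1}^m α_i = 1, 1 ≤ m ≤ k+1, such that the vectors [f_1(x_i),…,f_k(x_i),1]ᵀ ∈ ℝ^{k+1}, 1 ≤ i ≤ m, are linearly independent. Moreover, if the moment conditions are imposed with equality (ℋ_k = {P : ∫ f_i dP = c_i, 1 ≤ i ≤ k}), then the set of extreme points of ℋ_k equals the set of all such discrete measures in ℋ_k. -/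
open MeasureTheory NNReal TopologicalSpace
open scoped ENNReal

set_option linter.unusedSectionVars false
set_option maxHeartbeats 1000000

/-- `P` is an extreme point of the convex set `S` of probability measures: `P ∈ S` and `P`
cannot be written as `(1−α)Q + αR` with `Q, R ∈ S`, `Q ≠ R`, `α ∈ (0,1)`. -/
def IsExtremePM {Ω : Type*} [MeasurableSpace Ω]
    (S : Set (ProbabilityMeasure Ω)) (P : ProbabilityMeasure Ω) : Prop :=
  P ∈ S ∧ ¬ ∃ Q ∈ S, ∃ R ∈ S, ∃ α : ℝ≥0, Q ≠ R ∧ 0 < α ∧ α < 1 ∧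
    (P : Measure Ω) = (1 - α) • (Q : Measure Ω) + α • (R : Measure Ω)

/-- `P = Σ_{i=1}^m α_i δ_{x_i}` with `1 ≤ m ≤ k+1`, `α_i ∈ [0,1]`, `Σ α_i = 1`, and the
vectors `[f_1(x_i),…,f_k(x_i),1]ᵀ`, `1 ≤ i ≤ m`, linearly independent in `ℝ^{k+1}`. -/
def HasWinklerForm {Ω : Type*} [MeasurableSpace Ω] {k : ℕ}
    (f : Fin k → Ω → ℝ) (P : ProbabilityMeasure Ω) : Prop :=
  ∃ m : ℕ, 1 ≤ m ∧ m ≤ k + 1 ∧ ∃ x : Fin m → Ω, ∃ α : Fin m → ℝ,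
    (∀ i, α i ∈ Set.Icc (0 : ℝ) 1) ∧ (∑ i, α i = 1) ∧
    (P : Measure Ω) = ∑ i, ENNReal.ofReal (α i) • Measure.dirac (x i) ∧
    LinearIndependent ℝ (fun i : Fin m =>
      (Fin.snoc (fun j : Fin k => f j (x i)) (1 : ℝ) : Fin (k + 1) → ℝ))

/-! ### Auxiliary lemmas -/

section Aux
variable {Ω : Type*} [MeasurableSpace Ω] [MeasurableSingletonClass Ω]

lemma integrable_dirac'' {g : Ω → ℝ} (hg : Measurable g) (x : Ω) :
    Integrable g (Measure.dirac x) := by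
  refine ⟨hg.aestronglyMeasurable, ?_⟩
  rw [HasFiniteIntegral, lintegral_dirac' _ hg.enorm]
  exact ENNReal.coe_lt_top

lemma integral_sum_dirac {m : ℕ} (x : Fin m → Ω) (α : Fin m → ℝ)
    (hα : ∀ i, 0 ≤ α i) {g : Ω → ℝ} (hg : Measurable g) :
    ∫ y, g y ∂(∑ i, ENNReal.ofReal (α i) • Measure.dirac (x i)) = ∑ i, α i * g (x i) := by
  rw [integral_finset_sum_measure
    (fun i _ => (integrable_dirac'' hg (x i)).smul_measure ENNReal.ofReal_ne_top)]
  simp [integral_smul_measure, integral_dirac _ _, ENNReal.toReal_ofReal (hα _), smul_eq_mul]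

lemma sum_dirac_apply {m : ℕ} (x : Fin m → Ω) (α : Fin m → ℝ)
    {B : Set Ω} (hB : MeasurableSet B) :
    (∑ i, ENNReal.ofReal (α i) • Measure.dirac (x i)) B
      = ∑ i, Set.indicator B (fun _ => ENNReal.ofReal (α i)) (x i) := by
  classical
  rw [Measure.finset_sum_apply]
  refine Finset.sum_congr rfl fun i _ => ?_
  rw [Measure.smul_apply, Measure.dirac_apply' _ hB, Set.indicator_apply, Set.indicator_apply]
  split <;> simp

lemma isProb_sum_dirac {m : ℕ} (x : Fin m → Ω) (α : Fin m → ℝ)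
    (hα : ∀ i, 0 ≤ α i) (hsum : ∑ i, α i = 1) :
    IsProbabilityMeasure (∑ i, ENNReal.ofReal (α i) • Measure.dirac (x i)) := by
  constructor
  rw [sum_dirac_apply x α MeasurableSet.univ]
  simp only [Set.indicator_univ]
  rw [← ENNReal.ofReal_sum_of_nonneg (fun i _ => hα i), hsum, ENNReal.ofReal_one]

lemma forall_snoc {n : ℕ} {γ : Type*} (A : Fin n → γ) (B : γ) (Pr : γ → Prop)
    (hA : ∀ j, Pr (A j)) (hB : Pr B) : ∀ p, Pr ((Fin.snoc A B : Fin (n+1) → γ) p) := by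
  intro p
  induction p using Fin.lastCases with
  | last => rw [Fin.snoc_last]; exact hB
  | cast i => rw [Fin.snoc_castSucc]; exact hA i

lemma pairwise_disjoint_snoc {γ : Type*} {n : ℕ} {A : Fin n → Set γ} {B : Set γ}
    (h : Pairwise (Function.onFun Disjoint A)) (hB : ∀ j, Disjoint (A j) B) :
    Pairwise (Function.onFun Disjoint (Fin.snoc A B : Fin (n+1) → Set γ)) := by
  intro p q hpq
  induction p using Fin.lastCases with
  | last =>
    induction q using Fin.lastCases with
    | last => exact absurd rfl hpq
    | cast j =>
      simp only [Function.onFun, Fin.snoc_last, Fin.snoc_castSucc]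
      exact (hB j).symm
  | cast i =>
    induction q using Fin.lastCases with
    | last =>
      simp only [Function.onFun, Fin.snoc_last, Fin.snoc_castSucc]
      exact hB i
    | cast j =>
      simp only [Function.onFun, Fin.snoc_castSucc]
      exact h fun heq => hpq (congrArg Fin.castSucc heq)

lemma pairwise_disjoint_update {γ : Type*} {n : ℕ} {A : Fin n → Set γ}
    (h : Pairwise (Function.onFun Disjoint A)) (j : Fin n) {B : Set γ} (hB : B ⊆ A j) :
    Pairwise (Function.onFun Disjoint (Function.update A j B)) := by
  classical
  intro p q hpq
  simp only [Function.onFun]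
  by_cases hp : p = j <;> by_cases hq : q = j
  · exact absurd (hp.trans hq.symm) hpq
  · rw [hp, Function.update_self, Function.update_of_ne hq]
    exact (h (Ne.symm hq)).mono_left hB
  · rw [hq, Function.update_self, Function.update_of_ne hp]
    exact (h hp).mono_right hB
  · rw [Function.update_of_ne hp, Function.update_of_ne hq]
    exact h hpq

lemma measure_decomp (μ : Measure Ω) {n : ℕ}
    {A : Fin n → Set Ω} (hmeas : ∀ j, MeasurableSet (A j))
    (hdisj : Pairwise (Function.onFun Disjoint A)) {B : Set Ω} (hB : MeasurableSet B) :
    μ B = μ (B ∩ (⋃ j, A j)ᶜ) + ∑ j, μ (B ∩ A j) := by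
  have hU : MeasurableSet (⋃ j, A j) := MeasurableSet.iUnion hmeas
  have h1 : μ (B ∩ ⋃ j, A j) = ∑ j, μ (B ∩ A j) := by
    rw [Set.inter_iUnion, measure_iUnion ?_ (fun j => hB.inter (hmeas j)), tsum_fintype]
    exact fun i j hij => (hdisj hij).mono Set.inter_subset_right Set.inter_subset_right
  have h2 := measure_inter_add_diff (μ := μ) B hU
  rw [← h2, h1, Set.diff_eq]
  exact add_comm _ _

end Aux

/-- An atom of a finite Borel measure on a separable metric space is a point mass. -/
lemma atom_eq_dirac {Ω : Type*} [MetricSpace Ω] [SeparableSpace Ω]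
    [MeasurableSpace Ω] [BorelSpace Ω]
    (P : Measure Ω) [IsFiniteMeasure P] {A : Set Ω} (hA : MeasurableSet A) (hpos : P A ≠ 0)
    (hatom : ∀ B : Set Ω, B ⊆ A → MeasurableSet B → P B = 0 ∨ P B = P A) :
    ∃ x ∈ A, P (A \ {x}) = 0 := by
  classical
  haveI : SecondCountableTopology Ω := UniformSpace.secondCountable_of_separable Ω
  set 𝒢 : Set (Set Ω) := {U | U ∈ countableBasis Ω ∧ P (A ∩ U) = 0} with h𝒢
  have hGnull : P (A ∩ ⋃₀ 𝒢) = 0 := by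
    rw [Set.sUnion_eq_biUnion, Set.inter_iUnion₂]
    exact (measure_biUnion_null_iff ((countable_countableBasis Ω).mono
      (fun U hU => hU.1))).2 (fun U hU => hU.2)
  have hfull : ∀ z ∈ A \ ⋃₀ 𝒢, ∀ U ∈ countableBasis Ω, z ∈ U → P (A ∩ U) = P A := by
    intro z hz U hU hzU
    have hUnot : U ∉ 𝒢 := fun hmem => hz.2 ⟨U, hmem, hzU⟩
    have hne : P (A ∩ U) ≠ 0 := fun h0 => hUnot ⟨hU, h0⟩
    rcases hatom (A ∩ U) Set.inter_subset_left
      (hA.inter (isOpen_of_mem_countableBasis hU).measurableSet) with h | h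
    · exact absurd h hne
    · exact h
  have hdiff : P (A \ ⋃₀ 𝒢) ≠ 0 := by
    have : A \ ⋃₀ 𝒢 = A \ (A ∩ ⋃₀ 𝒢) := by rw [Set.diff_self_inter]
    rw [this, measure_diff_null hGnull]
    exact hpos
  obtain ⟨x, hx⟩ := nonempty_of_measure_ne_zero hdiff
  refine ⟨x, hx.1, ?_⟩
  -- every point of A \ ⋃₀ 𝒢 equals x
  have huniq : ∀ y ∈ A \ ⋃₀ 𝒢, y = x := by
    intro y hy
    by_contra hne
    have hd : (0 : ℝ) < dist y x := dist_pos.2 hne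
    obtain ⟨U, hU, hyU, hUsub⟩ := (isBasis_countableBasis Ω).exists_subset_of_mem_open
      (Metric.mem_ball_self (by linarith : (0:ℝ) < dist y x / 2)) Metric.isOpen_ball
    obtain ⟨V, hV, hxV, hVsub⟩ := (isBasis_countableBasis Ω).exists_subset_of_mem_open
      (Metric.mem_ball_self (by linarith : (0:ℝ) < dist y x / 2)) Metric.isOpen_ball
    have hdisj : Disjoint (A ∩ U) (A ∩ V) := by
      refine Set.disjoint_left.2 fun z hzU hzV => ?_
      have h1 : dist z y < dist y x / 2 := hUsub hzU.2
      have h2 : dist z x < dist y x / 2 := hVsub hzV.2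
      have := dist_triangle y z x
      rw [dist_comm z y] at h1
      linarith
    have h1 := hfull y hy U hU hyU
    have h2 := hfull x hx V hV hxV
    have hunion : P (A ∩ U ∪ A ∩ V) = P A + P A := by
      rw [measure_union hdisj (hA.inter (isOpen_of_mem_countableBasis hV).measurableSet),
        h1, h2]
    have hle : P (A ∩ U ∪ A ∩ V) ≤ P A :=
      measure_mono (Set.union_subset Set.inter_subset_left Set.inter_subset_left)
    rw [hunion] at hle
    have : P A + P A ≤ P A + 0 := by simpa using hle
    exact hpos (le_zero_iff.1 ((ENNReal.add_le_add_iff_left (measure_ne_top P A)).1 this))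
  have hsub : A \ {x} ⊆ A ∩ ⋃₀ 𝒢 := by
    intro y hy
    refine ⟨hy.1, ?_⟩
    by_contra hyG
    exact hy.2 (huniq y ⟨hy.1, hyG⟩)
  exact measure_mono_null hsub hGnull

/-- Producing a nontrivial convex splitting of `P` with the same moments contradicts
extremality. -/
lemma not_half_split {Ω : Type*} [MeasurableSpace Ω] {k : ℕ} (f : Fin k → Ω → ℝ)
    (P : ProbabilityMeasure Ω) (S : Set (ProbabilityMeasure Ω))
    (hS : ∀ Q : ProbabilityMeasure Ω,
      (∀ i, ∫ x, f i x ∂(Q : Measure Ω) = ∫ x, f i x ∂(P : Measure Ω)) → Q ∈ S)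
    (hext : IsExtremePM S P) (Q R : Measure Ω)
    (hQ : IsProbabilityMeasure Q) (hR : IsProbabilityMeasure R) (hne : Q ≠ R)
    (hQi : ∀ i, ∫ x, f i x ∂Q = ∫ x, f i x ∂(P : Measure Ω))
    (hRi : ∀ i, ∫ x, f i x ∂ R = ∫ x, f i x ∂(P : Measure Ω))
    (hsum : Q + R = (2 : ℝ≥0∞) • (P : Measure Ω)) : False := by
  apply hext.2
  refine ⟨⟨Q, hQ⟩, hS _ hQi, ⟨R, hR⟩, hS _ hRi, 2⁻¹, ?_, by norm_num, ?_, ?_⟩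
  · intro h
    exact hne (congrArg ProbabilityMeasure.toMeasure h)
  · rw [← NNReal.coe_lt_coe]
    norm_num
  · have h12 : (1 - 2⁻¹ : ℝ≥0) = 2⁻¹ := by
      rw [← NNReal.coe_inj, NNReal.coe_sub (by norm_num)]; norm_num
    show (P : Measure Ω) = (1 - 2⁻¹ : ℝ≥0) • Q + (2⁻¹ : ℝ≥0) • R
    rw [h12]
    have hc : ((2⁻¹ : ℝ≥0) : ℝ≥0∞) = (2⁻¹ : ℝ≥0∞) := by
      rw [ENNReal.coe_inv (by norm_num)]; norm_num
    have hQc : ((2⁻¹ : ℝ≥0) • Q : Measure Ω) = (2⁻¹ : ℝ≥0∞) • Q := by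
      rw [show ((2⁻¹ : ℝ≥0) • Q : Measure Ω) = ((2⁻¹ : ℝ≥0) : ℝ≥0∞) • Q from rfl, hc]
    have hRc : ((2⁻¹ : ℝ≥0) • R : Measure Ω) = (2⁻¹ : ℝ≥0∞) • R := by
      rw [show ((2⁻¹ : ℝ≥0) • R : Measure Ω) = ((2⁻¹ : ℝ≥0) : ℝ≥0∞) • R from rfl, hc]
    rw [hQc, hRc, ← smul_add, hsum, smul_smul,
      ENNReal.inv_mul_cancel (by norm_num) (by norm_num), one_smul]

/-- Every extreme point of a moment set is a Winkler-form discrete measure. -/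
lemma extreme_to_winkler {Ω : Type*} [MetricSpace Ω] [SeparableSpace Ω]
    [MeasurableSpace Ω] [BorelSpace Ω] {k : ℕ} (f : Fin k → Ω → ℝ)
    (hf : ∀ i, Measurable (f i)) (P : ProbabilityMeasure Ω) (S : Set (ProbabilityMeasure Ω))
    (hS : ∀ Q : ProbabilityMeasure Ω,
      (∀ i, ∫ x, f i x ∂(Q : Measure Ω) = ∫ x, f i x ∂(P : Measure Ω)) → Q ∈ S)
    (hext : IsExtremePM S P) : HasWinklerForm f P := by
  classical
  set μ : Measure Ω := (P : Measure Ω) with hμdef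
  haveI hPμ : IsProbabilityMeasure μ := P.2
  -- Step 1: there is no family of k+2 disjoint sets of positive measure
  have no_split : ∀ A : Fin (k+2) → Set Ω, (∀ j, MeasurableSet (A j)) →
      Pairwise (Function.onFun Disjoint A) → (∀ j, μ (A j) ≠ 0) → False := by
    intro A hmeas hdisj hpos
    set v : Fin (k+2) → Fin (k+1) → ℝ := fun j =>
      Fin.snoc (fun i : Fin k => ∫ x in A j, f i x ∂μ) ((μ (A j)).toReal) with hv
    have hnli : ¬ LinearIndependent ℝ v := by
      intro h
      have h2 := h.fintype_card_le_finrank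
      simp only [Module.finrank_fintype_fun_eq_card, Fintype.card_fin] at h2
      omega
    obtain ⟨t, hrel, j0, ht0⟩ := Fintype.not_linearIndependent_iff.1 hnli
    have happ : ∀ p : Fin (k+1), ∑ j, t j * v j p = 0 := by
      intro p
      have := congrFun hrel p
      simpa [Finset.sum_apply, Pi.smul_apply, smul_eq_mul] using this
    have hlast : ∑ j, t j * (μ (A j)).toReal = 0 := by
      have := happ (Fin.last k)
      simpa [hv, Fin.snoc_last] using this
    have hcoord : ∀ i : Fin k, ∑ j, t j * ∫ x in A j, f i x ∂μ = 0 := by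
      intro i
      have := happ i.castSucc
      simpa [hv, Fin.snoc_castSucc] using this
    set M : ℝ := Finset.univ.sup' Finset.univ_nonempty (fun j => |t j|) with hM
    have hMpos : 0 < M := lt_of_lt_of_le (abs_pos.2 ht0) (Finset.le_sup' (fun j => |t j|) (Finset.mem_univ j0))
    set ε : ℝ := (2 * M)⁻¹ with hε
    have hεpos : 0 < ε := by positivity
    have hbound : ∀ j, |ε * t j| ≤ 2⁻¹ := by
      intro j
      rw [abs_mul, abs_of_pos hεpos]
      have h1 : |t j| ≤ M := Finset.le_sup' (fun j => |t j|) (Finset.mem_univ j)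
      have h2 : ε * |t j| ≤ ε * M := mul_le_mul_of_nonneg_left h1 hεpos.le
      have h3 : ε * M = 2⁻¹ := by rw [hε]; field_simp
      linarith
    set a : Fin (k+2) → ℝ := fun j => 1 + ε * t j with ha
    set b : Fin (k+2) → ℝ := fun j => 1 - ε * t j with hb
    have hacb : ∀ j, 2⁻¹ ≤ a j ∧ a j ≤ 2 := by
      intro j; have := abs_le.1 (hbound j)
      constructor <;> (simp only [ha]; nlinarith [this.1, this.2])
    have hbcb : ∀ j, 2⁻¹ ≤ b j ∧ b j ≤ 2 := by
      intro j; have := abs_le.1 (hbound j)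
      constructor <;> (simp only [hb]; nlinarith [this.1, this.2])
    have ha0 : ∀ j, 0 ≤ a j := fun j => le_trans (by norm_num) (hacb j).1
    have hb0 : ∀ j, 0 ≤ b j := fun j => le_trans (by norm_num) (hbcb j).1
    set U := ⋃ j, A j with hU
    have hUm : MeasurableSet U := MeasurableSet.iUnion hmeas
    have hdec : ∀ B : Set Ω, MeasurableSet B →
        μ B = μ (B ∩ Uᶜ) + ∑ j, μ (B ∩ A j) := fun B hB => measure_decomp μ hmeas hdisj hB
    have hfinA : ∀ j, μ (A j) ≠ ⊤ := fun j => measure_ne_top μ _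
    -- the perturbed measures
    set ν : (Fin (k+2) → ℝ) → Measure Ω := fun g =>
      μ.restrict Uᶜ + ∑ j, ENNReal.ofReal (g j) • μ.restrict (A j) with hν
    have happly : ∀ (g : Fin (k+2) → ℝ) (B : Set Ω), MeasurableSet B →
        ν g B = μ (B ∩ Uᶜ) + ∑ j, ENNReal.ofReal (g j) * μ (B ∩ A j) := by
      intro g B hB
      rw [hν]
      simp only
      rw [Measure.add_apply, Measure.finset_sum_apply, Measure.restrict_apply hB]
      congr 1
      refine Finset.sum_congr rfl fun j _ => ?_
      rw [Measure.smul_apply, Measure.restrict_apply hB, smul_eq_mul]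
    -- ν a + ν b = 2 μ
    have hQR2 : ν a + ν b = (2:ℝ≥0∞) • μ := by
      ext B hB
      rw [Measure.add_apply, happly a B hB, happly b B hB, Measure.smul_apply, smul_eq_mul]
      have hab : ∀ j, ENNReal.ofReal (a j) + ENNReal.ofReal (b j) = 2 := by
        intro j
        rw [← ENNReal.ofReal_add (ha0 j) (hb0 j)]
        have h2 : a j + b j = 2 := by simp only [ha, hb]; ring
        rw [h2, ENNReal.ofReal_ofNat]
      have hsum2 : (∑ j, ENNReal.ofReal (a j) * μ (B ∩ A j))
          + (∑ j, ENNReal.ofReal (b j) * μ (B ∩ A j)) = 2 * ∑ j, μ (B ∩ A j) := by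
        rw [← Finset.sum_add_distrib, Finset.mul_sum]
        exact Finset.sum_congr rfl fun j _ => by rw [← add_mul, hab j]
      calc (μ (B ∩ Uᶜ) + ∑ j, ENNReal.ofReal (a j) * μ (B ∩ A j))
            + (μ (B ∩ Uᶜ) + ∑ j, ENNReal.ofReal (b j) * μ (B ∩ A j))
          = (μ (B ∩ Uᶜ) + μ (B ∩ Uᶜ)) + ((∑ j, ENNReal.ofReal (a j) * μ (B ∩ A j))
            + (∑ j, ENNReal.ofReal (b j) * μ (B ∩ A j))) := by ring
        _ = 2 * μ (B ∩ Uᶜ) + 2 * ∑ j, μ (B ∩ A j) := by rw [hsum2, ← two_mul]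
        _ = 2 * (μ (B ∩ Uᶜ) + ∑ j, μ (B ∩ A j)) := by ring
        _ = 2 * μ B := by rw [← hdec B hB]
    -- probability measures
    have hprob : ∀ g : Fin (k+2) → ℝ, (∀ j, 0 ≤ g j) →
        (∑ j, g j * (μ (A j)).toReal = ∑ j, (μ (A j)).toReal) →
        IsProbabilityMeasure (ν g) := by
      intro g hg hgs
      constructor
      rw [happly g _ MeasurableSet.univ]
      simp only [Set.univ_inter]
      have h1 : ∀ j, ENNReal.ofReal (g j) * μ (A j)
          = ENNReal.ofReal (g j * (μ (A j)).toReal) := by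
        intro j
        rw [ENNReal.ofReal_mul (hg j), ENNReal.ofReal_toReal (hfinA j)]
      rw [Finset.sum_congr rfl (fun j _ => h1 j),
        ← ENNReal.ofReal_sum_of_nonneg (fun j _ => mul_nonneg (hg j) ENNReal.toReal_nonneg),
        hgs, ENNReal.ofReal_sum_of_nonneg (fun j _ => ENNReal.toReal_nonneg),
        Finset.sum_congr rfl (fun j _ => ENNReal.ofReal_toReal (hfinA j))]
      have h2 := hdec Set.univ MeasurableSet.univ
      simp only [Set.univ_inter] at h2
      rw [← h2, measure_univ]
    -- comparability with μ
    have hle2 : ∀ g : Fin (k+2) → ℝ, (∀ j, 0 ≤ g j) → (∀ j, g j ≤ 2) →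
        ν g ≤ (2:ℝ≥0∞) • μ := by
      intro g hg0 hg2
      refine Measure.le_iff.2 fun B hB => ?_
      rw [happly g B hB, Measure.smul_apply, smul_eq_mul, hdec B hB, mul_add]
      refine add_le_add ?_ ?_
      · conv_lhs => rw [← one_mul (μ (B ∩ Uᶜ))]
        exact mul_le_mul_left one_le_two _
      · rw [Finset.mul_sum]
        refine Finset.sum_le_sum fun j _ => ?_
        refine mul_le_mul_left ?_ _
        calc ENNReal.ofReal (g j) ≤ ENNReal.ofReal 2 := ENNReal.ofReal_le_ofReal (hg2 j)
          _ = 2 := ENNReal.ofReal_ofNat 2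
    have hge2 : ∀ g : Fin (k+2) → ℝ, (∀ j, 2⁻¹ ≤ g j) → μ ≤ (2:ℝ≥0∞) • ν g := by
      intro g hglo
      refine Measure.le_iff.2 fun B hB => ?_
      rw [Measure.smul_apply, smul_eq_mul, happly g B hB, hdec B hB, mul_add, Finset.mul_sum]
      refine add_le_add ?_ ?_
      · conv_lhs => rw [← one_mul (μ (B ∩ Uᶜ))]
        exact mul_le_mul_left one_le_two _
      · refine Finset.sum_le_sum fun j _ => ?_
        conv_lhs => rw [← one_mul (μ (B ∩ A j))]
        rw [← mul_assoc]
        refine mul_le_mul_left ?_ _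
        have h1 : (2⁻¹ : ℝ≥0∞) ≤ ENNReal.ofReal (g j) := by
          calc (2⁻¹ : ℝ≥0∞) = ENNReal.ofReal 2⁻¹ := by
                rw [ENNReal.ofReal_inv_of_pos (by norm_num), ENNReal.ofReal_ofNat]
            _ ≤ ENNReal.ofReal (g j) := ENNReal.ofReal_le_ofReal (hglo j)
        calc (1 : ℝ≥0∞) = 2 * 2⁻¹ := by
              rw [ENNReal.mul_inv_cancel (by norm_num) (by norm_num)]
          _ ≤ 2 * ENNReal.ofReal (g j) := mul_le_mul_right h1 _
    -- integrability transfer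
    have hinteq : ∀ g : Fin (k+2) → ℝ, (∀ j, 0 ≤ g j) → (∀ j, 2⁻¹ ≤ g j) → (∀ j, g j ≤ 2) →
        ∀ φ : Ω → ℝ, (Integrable φ (ν g) ↔ Integrable φ μ) := by
      intro g h0 hlo hhi φ
      constructor
      · intro h
        exact ((h.smul_measure (by norm_num : (2:ℝ≥0∞) ≠ ⊤))).mono_measure (hge2 g hlo)
      · intro h
        exact ((h.smul_measure (by norm_num : (2:ℝ≥0∞) ≠ ⊤))).mono_measure (hle2 g h0 hhi)
    -- integral identity
    have hμdec2 : μ = μ.restrict Uᶜ + ∑ j, μ.restrict (A j) := by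
      ext B hB
      rw [Measure.add_apply, Measure.finset_sum_apply, Measure.restrict_apply hB, hdec B hB]
      congr 1
      exact Finset.sum_congr rfl fun j _ => (Measure.restrict_apply hB).symm
    have hgint : ∀ g : Fin (k+2) → ℝ, (∀ j, 0 ≤ g j) → (∀ j, 2⁻¹ ≤ g j) → (∀ j, g j ≤ 2) →
        (∀ i, ∑ j, g j * ∫ x in A j, f i x ∂μ = ∑ j, ∫ x in A j, f i x ∂μ) →
        ∀ i, ∫ x, f i x ∂(ν g) = ∫ x, f i x ∂μ := by
      intro g h0 hlo hhi hgs i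
      by_cases hInt : Integrable (f i) μ
      · have hterm : ∀ j, Integrable (f i) (ENNReal.ofReal (g j) • μ.restrict (A j)) :=
          fun j => (hInt.restrict).smul_measure ENNReal.ofReal_ne_top
        have e1 : ∫ x, f i x ∂(ν g)
            = ∫ x, f i x ∂(μ.restrict Uᶜ) + ∑ j, g j * ∫ x in A j, f i x ∂μ := by
          rw [hν]
          simp only
          rw [integral_add_measure hInt.restrict (integrable_finset_sum_measure.2 (fun j _ => hterm j)),
            integral_finset_sum_measure (fun j _ => hterm j)]
          congr 1
          refine Finset.sum_congr rfl fun j _ => ?_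
          rw [integral_smul_measure, ENNReal.toReal_ofReal (h0 j), smul_eq_mul]
        have e2 : ∫ x, f i x ∂μ
            = ∫ x, f i x ∂(μ.restrict Uᶜ) + ∑ j, ∫ x in A j, f i x ∂μ := by
          conv_lhs => rw [hμdec2]
          rw [integral_add_measure hInt.restrict
            (integrable_finset_sum_measure.2 (fun j _ => hInt.restrict)),
            integral_finset_sum_measure (fun j _ => hInt.restrict)]
        rw [e1, hgs i, ← e2]
      · rw [integral_undef hInt, integral_undef (fun h => hInt ((hinteq g h0 hlo hhi (f i)).1 h))]
    -- coefficient identities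
    have hgsa : ∀ (s : ℝ) (w : Fin (k+2) → ℝ) (I : Fin (k+2) → ℝ), (∑ j, w j * I j = 0) →
        ∑ j, (1 + s * w j) * I j = ∑ j, I j := by
      intro s w I hw
      have : ∑ j, (1 + s * w j) * I j = ∑ j, I j + s * ∑ j, w j * I j := by
        rw [Finset.mul_sum, ← Finset.sum_add_distrib]
        exact Finset.sum_congr rfl fun j _ => by ring
      rw [this, hw, mul_zero, add_zero]
    have hgsb : ∀ (s : ℝ) (w : Fin (k+2) → ℝ) (I : Fin (k+2) → ℝ), (∑ j, w j * I j = 0) →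
        ∑ j, (1 - s * w j) * I j = ∑ j, I j := by
      intro s w I hw
      have : ∑ j, (1 - s * w j) * I j = ∑ j, I j - s * ∑ j, w j * I j := by
        rw [Finset.mul_sum, ← Finset.sum_sub_distrib]
        exact Finset.sum_congr rfl fun j _ => by ring
      rw [this, hw, mul_zero, sub_zero]
    -- ν a ≠ ν b
    have hQRne : ν a ≠ ν b := by
      intro hEq
      have h1 := congrArg (fun m : Measure Ω => m (A j0)) hEq
      rw [happly a _ (hmeas j0), happly b _ (hmeas j0)] at h1
      have hinterU : A j0 ∩ Uᶜ = ∅ :=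
        Set.eq_empty_iff_forall_notMem.2 fun z hz => hz.2 (Set.mem_iUnion.2 ⟨j0, hz.1⟩)
      have hoff : ∀ (g : Fin (k+2) → ℝ),
          ∑ j, ENNReal.ofReal (g j) * μ (A j0 ∩ A j) = ENNReal.ofReal (g j0) * μ (A j0) := by
        intro g
        rw [Finset.sum_eq_single j0]
        · rw [Set.inter_self]
        · intro j _ hj
          have : A j0 ∩ A j = ∅ := (hdisj (Ne.symm hj)).inter_eq
          rw [this, measure_empty, mul_zero]
        · intro h; exact absurd (Finset.mem_univ j0) h
      rw [hinterU, measure_empty, zero_add, zero_add, hoff a, hoff b] at h1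
      have h2 := (ENNReal.mul_left_inj (hpos j0) (hfinA j0)).1 h1
      have h3 := (ENNReal.ofReal_eq_ofReal_iff (ha0 j0) (hb0 j0)).1 h2
      have h4 : ε * t j0 = 0 := by simp only [ha, hb] at h3; linarith
      exact (mul_ne_zero hεpos.ne' ht0) h4
    -- assemble
    refine not_half_split f P S hS hext (ν a) (ν b)
      (hprob a ha0 (hgsa ε t _ hlast)) (hprob b hb0 (hgsb ε t _ hlast)) hQRne
      (fun i => hgint a ha0 (fun j => (hacb j).1) (fun j => (hacb j).2)
        (fun i => hgsa ε t _ (hcoord i)) i)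
      (fun i => hgint b hb0 (fun j => (hbcb j).1) (fun j => (hbcb j).2)
        (fun i => hgsb ε t _ (hcoord i)) i)
      hQR2
  -- Step 2: maximal splitting into disjoint positive-measure pieces
  set Splits : ℕ → Prop := fun n => ∃ A : Fin n → Set Ω, (∀ j, MeasurableSet (A j)) ∧
      Pairwise (Function.onFun Disjoint A) ∧ ∀ j, μ (A j) ≠ 0 with hSplitsdef
  have hbound : ∀ n, Splits n → n ≤ k + 1 := by
    rintro n ⟨A, h1, h2, h3⟩
    by_contra hn
    push_neg at hn
    exact no_split (fun j => A (Fin.castLE hn j)) (fun j => h1 _)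
      (fun i j hij => h2 ((Fin.castLE_injective hn).ne hij)) (fun j => h3 _)
  have h1T : Splits 1 := ⟨fun _ => Set.univ, fun _ => MeasurableSet.univ,
    fun i j hij => absurd (Subsingleton.elim i j) hij,
    fun _ => by rw [measure_univ]; exact one_ne_zero⟩
  have hTne : {n | Splits n}.Nonempty := ⟨1, h1T⟩
  have hTbdd : BddAbove {n | Splits n} := ⟨k+1, fun n hn => hbound n hn⟩
  set m := sSup {n | Splits n} with hmdef
  have hmT : Splits m := Nat.sSup_mem hTne hTbdd
  have hm1 : 1 ≤ m := le_csSup hTbdd h1T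
  have hmk : m ≤ k + 1 := hbound m hmT
  have hmax : ¬ Splits (m+1) := by
    intro h
    have := le_csSup hTbdd (show m + 1 ∈ {n | Splits n} from h)
    omega
  obtain ⟨A, hmeas, hdisj, hpos⟩ := hmT
  set U := ⋃ j, A j with hUdef
  have hUm : MeasurableSet U := MeasurableSet.iUnion hmeas
  have hcompl : μ Uᶜ = 0 := by
    by_contra h
    exact hmax ⟨Fin.snoc A Uᶜ,
      forall_snoc A Uᶜ MeasurableSet (fun j => hmeas j) hUm.compl,
      pairwise_disjoint_snoc hdisj
        (fun j => disjoint_compl_right.mono_left (Set.subset_iUnion A j)),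
      forall_snoc A Uᶜ (fun s => μ s ≠ 0) hpos h⟩
  -- Step 3: each piece is an atom
  have hatom : ∀ j, ∀ B : Set Ω, B ⊆ A j → MeasurableSet B → μ B = 0 ∨ μ B = μ (A j) := by
    intro j B hBsub hBm
    by_contra hcon
    push_neg at hcon
    obtain ⟨h0, hne⟩ := hcon
    have hdiffpos : μ (A j \ B) ≠ 0 := by
      intro hd
      apply hne
      have h1 : μ (A j) ≤ μ B := by
        calc μ (A j) = μ (A j ∩ B) + μ (A j \ B) := (measure_inter_add_diff _ hBm).symm
          _ = μ (A j ∩ B) := by rw [hd, add_zero]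
          _ ≤ μ B := measure_mono Set.inter_subset_right
      exact le_antisymm (measure_mono hBsub) h1
    refine hmax ⟨Fin.snoc (Function.update A j B) (A j \ B), ?_, ?_, ?_⟩
    · refine forall_snoc _ _ MeasurableSet ?_ ((hmeas j).diff hBm)
      intro i
      rcases eq_or_ne i j with rfl | hne'
      · rw [Function.update_self]; exact hBm
      · rw [Function.update_of_ne hne']; exact hmeas i
    · refine pairwise_disjoint_snoc (pairwise_disjoint_update hdisj j hBsub) ?_
      intro i
      rcases eq_or_ne i j with rfl | hne'
      · rw [Function.update_self]; exact disjoint_sdiff_self_right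
      · rw [Function.update_of_ne hne']
        exact Disjoint.mono_right Set.diff_subset (hdisj hne')
    · refine forall_snoc _ _ (fun s => μ s ≠ 0) ?_ hdiffpos
      intro i
      rcases eq_or_ne i j with rfl | hne'
      · rw [Function.update_self]; exact h0
      · rw [Function.update_of_ne hne']; exact hpos i
  -- Step 4: atoms are point masses
  have hpts : ∀ j, ∃ x ∈ A j, μ (A j \ {x}) = 0 := fun j =>
    atom_eq_dirac μ (hmeas j) (hpos j) (fun B hs hm' => hatom j B hs hm')
  choose x hxA hxnull using hpts
  set α : Fin m → ℝ := fun j => (μ (A j)).toReal with hαdef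
  have hfin : ∀ j, μ (A j) ≠ ⊤ := fun j => measure_ne_top μ _
  have hα0 : ∀ j, 0 < α j := fun j => ENNReal.toReal_pos (hpos j) (hfin j)
  have hα1 : ∀ j, α j ≤ 1 := by
    intro j
    have h1 : μ (A j) ≤ 1 := prob_le_one
    calc α j = (μ (A j)).toReal := rfl
      _ ≤ (1 : ℝ≥0∞).toReal := ENNReal.toReal_mono ENNReal.one_ne_top h1
      _ = 1 := by simp
  have hμU : μ U = 1 := by
    have h := measure_add_measure_compl (μ := μ) hUm
    rw [hcompl, add_zero, measure_univ] at h
    exact h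
  have hsumμ : ∑ j, μ (A j) = 1 := by
    have h := measure_iUnion (μ := μ) hdisj hmeas
    rw [tsum_fintype] at h
    rw [← h]
    exact hμU
  have hsumα : ∑ j, α j = 1 := by
    have h : (∑ j, μ (A j)).toReal = 1 := by rw [hsumμ]; simp
    rw [ENNReal.toReal_sum (fun j _ => hfin j)] at h
    exact h
  have hμx : ∀ j, μ (A j ∩ {x j}ᶜ) = 0 := by
    intro j
    refine measure_mono_null ?_ (hxnull j)
    intro z hz
    exact ⟨hz.1, hz.2⟩
  have hPrep : μ = ∑ j, ENNReal.ofReal (α j) • Measure.dirac (x j) := by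
    ext B hB
    rw [sum_dirac_apply x α hB]
    have hBc : μ (B ∩ Uᶜ) = 0 := measure_mono_null Set.inter_subset_right hcompl
    rw [measure_decomp μ hmeas hdisj hB, hBc, zero_add]
    refine Finset.sum_congr rfl fun j _ => ?_
    rw [Set.indicator_apply]
    by_cases hxB : x j ∈ B
    · rw [if_pos hxB, ENNReal.ofReal_toReal (hfin j)]
      have h1 : μ (A j \ B) = 0 := by
        refine measure_mono_null ?_ (hxnull j)
        intro z hz
        exact ⟨hz.1, fun h => hz.2 ((Set.mem_singleton_iff.1 h) ▸ hxB)⟩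
      calc μ (B ∩ A j) = μ (A j ∩ B) := by rw [Set.inter_comm]
        _ = μ (A j ∩ B) + μ (A j \ B) := by rw [h1, add_zero]
        _ = μ (A j) := measure_inter_add_diff _ hB
    · rw [if_neg hxB]
      refine measure_mono_null ?_ (hxnull j)
      intro z hz
      exact ⟨hz.2, fun h => hxB ((Set.mem_singleton_iff.1 h) ▸ hz.1)⟩
  -- Step 5: linear independence, or else perturb
  by_cases hLI : LinearIndependent ℝ (fun j : Fin m =>
      (Fin.snoc (fun i : Fin k => f i (x j)) (1 : ℝ) : Fin (k + 1) → ℝ))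
  · exact ⟨m, hm1, hmk, x, α, fun j => ⟨(hα0 j).le, hα1 j⟩, hsumα, hPrep, hLI⟩
  · exfalso
    obtain ⟨t, hrel, j0, ht0⟩ := Fintype.not_linearIndependent_iff.1 hLI
    have happ : ∀ p : Fin (k+1),
        ∑ j, t j * (Fin.snoc (fun i : Fin k => f i (x j)) (1 : ℝ) : Fin (k + 1) → ℝ) p = 0 := by
      intro p
      have := congrFun hrel p
      simpa [Finset.sum_apply, Pi.smul_apply, smul_eq_mul] using this
    have hlast : ∑ j, t j = 0 := by
      have := happ (Fin.last k)
      simpa [Fin.snoc_last] using this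
    have hcoord : ∀ i : Fin k, ∑ j, t j * f i (x j) = 0 := by
      intro i
      have := happ i.castSucc
      simpa [Fin.snoc_castSucc] using this
    haveI : Nonempty (Fin m) := ⟨⟨0, hm1⟩⟩
    set M : ℝ := Finset.univ.sup' Finset.univ_nonempty (fun j => |t j|) with hM
    have hMpos : 0 < M := lt_of_lt_of_le (abs_pos.2 ht0) (Finset.le_sup' (fun j => |t j|) (Finset.mem_univ j0))
    set mn : ℝ := Finset.univ.inf' Finset.univ_nonempty α with hmn
    have hmnpos : 0 < mn :=
      (Finset.lt_inf'_iff _).2 fun j _ => hα0 j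
    set ε : ℝ := mn / (2 * M) with hε
    have hεpos : 0 < ε := by positivity
    have hbnd : ∀ j, |ε * t j| ≤ α j := by
      intro j
      rw [abs_mul, abs_of_pos hεpos]
      have h1 : |t j| ≤ M := Finset.le_sup' (fun j => |t j|) (Finset.mem_univ j)
      have h2 : mn ≤ α j := Finset.inf'_le α (Finset.mem_univ j)
      have h3 : ε * |t j| ≤ ε * M := mul_le_mul_of_nonneg_left h1 hεpos.le
      have h4 : ε * M = mn / 2 := by rw [hε]; field_simp
      linarith
    set β : Fin m → ℝ := fun j => α j + ε * t j with hβ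
    set γ : Fin m → ℝ := fun j => α j - ε * t j with hγ
    have hβ0 : ∀ j, 0 ≤ β j := by
      intro j; have := abs_le.1 (hbnd j); simp only [hβ]; linarith [this.1]
    have hγ0 : ∀ j, 0 ≤ γ j := by
      intro j; have := abs_le.1 (hbnd j); simp only [hγ]; linarith [this.2]
    have hβs : ∑ j, β j = 1 := by
      simp only [hβ]
      rw [Finset.sum_add_distrib, hsumα, ← Finset.mul_sum, hlast, mul_zero, add_zero]
    have hγs : ∑ j, γ j = 1 := by
      simp only [hγ]
      rw [Finset.sum_sub_distrib, hsumα, ← Finset.mul_sum, hlast, mul_zero, sub_zero]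
    have hint : ∀ (w : Fin m → ℝ), (∀ j, 0 ≤ w j) →
        (∀ i, ∑ j, w j * f i (x j) = ∑ j, α j * f i (x j)) →
        ∀ i, ∫ y, f i y ∂(∑ j, ENNReal.ofReal (w j) • Measure.dirac (x j)) = ∫ y, f i y ∂μ := by
      intro w hw hws i
      rw [integral_sum_dirac x w hw (hf i), hws i]
      conv_rhs => rw [hPrep]
      rw [integral_sum_dirac x α (fun j => (hα0 j).le) (hf i)]
    have hwβ : ∀ i, ∑ j, β j * f i (x j) = ∑ j, α j * f i (x j) := by
      intro i
      simp only [hβ]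
      have h : ∑ j, (α j + ε * t j) * f i (x j)
          = ∑ j, α j * f i (x j) + ε * ∑ j, t j * f i (x j) := by
        rw [Finset.mul_sum, ← Finset.sum_add_distrib]
        exact Finset.sum_congr rfl fun j _ => by ring
      rw [h, hcoord i, mul_zero, add_zero]
    have hwγ : ∀ i, ∑ j, γ j * f i (x j) = ∑ j, α j * f i (x j) := by
      intro i
      simp only [hγ]
      have h : ∑ j, (α j - ε * t j) * f i (x j)
          = ∑ j, α j * f i (x j) - ε * ∑ j, t j * f i (x j) := by
        rw [Finset.mul_sum, ← Finset.sum_sub_distrib]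
        exact Finset.sum_congr rfl fun j _ => by ring
      rw [h, hcoord i, mul_zero, sub_zero]
    have hx_inj : Function.Injective x := by
      intro i j hij
      by_contra hne
      exact (Set.disjoint_left.1 (hdisj hne) (hxA i)) (hij ▸ hxA j)
    have hQRne : (∑ j, ENNReal.ofReal (β j) • Measure.dirac (x j))
        ≠ (∑ j, ENNReal.ofReal (γ j) • Measure.dirac (x j)) := by
      intro hEq
      have h1 := congrArg (fun ν : Measure Ω => ν {x j0}) hEq
      rw [sum_dirac_apply x β (measurableSet_singleton _),
        sum_dirac_apply x γ (measurableSet_singleton _)] at h1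
      have hoff : ∀ w : Fin m → ℝ,
          ∑ j, Set.indicator {x j0} (fun _ => ENNReal.ofReal (w j)) (x j)
            = ENNReal.ofReal (w j0) := by
        intro w
        rw [Finset.sum_eq_single j0]
        · rw [Set.indicator_apply, if_pos (Set.mem_singleton _)]
        · intro j _ hj
          rw [Set.indicator_apply, if_neg]
          intro hmem
          exact hj (hx_inj (Set.mem_singleton_iff.1 hmem))
        · intro h; exact absurd (Finset.mem_univ j0) h
      rw [hoff β, hoff γ] at h1
      have h2 := (ENNReal.ofReal_eq_ofReal_iff (hβ0 j0) (hγ0 j0)).1 h1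
      have h3 : ε * t j0 = 0 := by simp only [hβ, hγ] at h2; linarith
      exact (mul_ne_zero hεpos.ne' ht0) h3
    have hQR2 : (∑ j, ENNReal.ofReal (β j) • Measure.dirac (x j))
        + (∑ j, ENNReal.ofReal (γ j) • Measure.dirac (x j)) = (2:ℝ≥0∞) • μ := by
      rw [← Finset.sum_add_distrib]
      conv_rhs => rw [hPrep]
      rw [Finset.smul_sum]
      refine Finset.sum_congr rfl fun j _ => ?_
      rw [← add_smul, ← ENNReal.ofReal_add (hβ0 j) (hγ0 j), smul_smul]
      congr 1
      have h : β j + γ j = 2 * α j := by simp only [hβ, hγ]; ring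
      rw [h, ENNReal.ofReal_mul (by norm_num), ENNReal.ofReal_ofNat]
    exact not_half_split f P S hS hext _ _
      (isProb_sum_dirac x β hβ0 hβs) (isProb_sum_dirac x γ hγ0 hγs) hQRne
      (hint β hβ0 hwβ) (hint γ hγ0 hwγ) hQR2

/-- Uniqueness part: a probability measure dominated by a fraction of a Winkler-form
measure with the same (equality) moments must coincide with it. -/
lemma winkler_eq {Ω : Type*} [MetricSpace Ω] [MeasurableSpace Ω] [BorelSpace Ω] {k : ℕ}
    (f : Fin k → Ω → ℝ) (hf : ∀ i, Measurable (f i)) (c : Fin k → ℝ)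
    (P : ProbabilityMeasure Ω) (hP : ∀ i, ∫ y, f i y ∂(P : Measure Ω) = c i)
    (hform : HasWinklerForm f P) (Q : ProbabilityMeasure Ω)
    (hQc : ∀ i, ∫ y, f i y ∂(Q : Measure Ω) = c i)
    (ca : ℝ≥0∞) (hca : ca ≠ 0) (hle : ca • (Q : Measure Ω) ≤ (P : Measure Ω)) :
    (Q : Measure Ω) = (P : Measure Ω) := by
  classical
  obtain ⟨m, hm1, hmk, x, α, hIcc, hsumα, hPrep, hLI⟩ := hform
  have hxinj : Function.Injective x := by
    intro i j hij
    exact hLI.injective (by rw [show x i = x j from hij])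
  set Sx : Set Ω := Set.range x with hSx
  have hSxm : MeasurableSet Sx := (Set.finite_range x).measurableSet
  have hPS : (P : Measure Ω) Sxᶜ = 0 := by
    rw [hPrep, sum_dirac_apply x α hSxm.compl]
    refine Finset.sum_eq_zero fun j _ => ?_
    rw [Set.indicator_apply, if_neg (fun h => h (Set.mem_range_self j))]
  have hQS : (Q : Measure Ω) Sxᶜ = 0 := by
    have h2 : (ca • (Q : Measure Ω)) Sxᶜ ≤ (P : Measure Ω) Sxᶜ := Measure.le_iff'.1 hle Sxᶜ
    rw [Measure.smul_apply, smul_eq_mul, hPS, nonpos_iff_eq_zero] at h2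
    rcases mul_eq_zero.1 h2 with h | h
    · exact absurd h hca
    · exact h
  set β : Fin m → ℝ := fun j => ((Q : Measure Ω) {x j}).toReal with hβ
  have hβ0 : ∀ j, 0 ≤ β j := fun j => ENNReal.toReal_nonneg
  have hofβ : ∀ j, ENNReal.ofReal (β j) = (Q : Measure Ω) {x j} := fun j =>
    ENNReal.ofReal_toReal (measure_ne_top _ _)
  have hQrep : (Q : Measure Ω) = ∑ j, ENNReal.ofReal (β j) • Measure.dirac (x j) := by
    ext B hB
    rw [sum_dirac_apply x β hB]
    have h1 : (Q : Measure Ω) B = (Q : Measure Ω) (B ∩ Sx) := by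
      have h := measure_inter_add_diff (μ := (Q : Measure Ω)) B hSxm
      have h0 : (Q : Measure Ω) (B \ Sx) = 0 :=
        measure_mono_null (fun z hz => hz.2) hQS
      rw [h0, add_zero] at h
      exact h.symm
    rw [h1]
    have h2 : B ∩ Sx = ⋃ j, B ∩ {x j} := by
      rw [hSx, Set.range_eq_iUnion, Set.inter_iUnion]
    rw [h2, measure_iUnion ?_ (fun j => hB.inter (measurableSet_singleton _)), tsum_fintype]
    · refine Finset.sum_congr rfl fun j _ => ?_
      rw [Set.indicator_apply]
      by_cases hxB : x j ∈ B
      · rw [if_pos hxB, hofβ j]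
        congr 1
        exact Set.inter_eq_self_of_subset_right (Set.singleton_subset_iff.2 hxB)
      · rw [if_neg hxB]
        have he : B ∩ {x j} = ∅ :=
          Set.eq_empty_iff_forall_notMem.2 fun z hz =>
            hxB ((Set.mem_singleton_iff.1 hz.2) ▸ hz.1)
        rw [he, measure_empty]
    · intro i j hij
      refine Set.disjoint_left.2 fun z hzi hzj => ?_
      exact hij (hxinj ((Set.mem_singleton_iff.1 hzi.2).symm.trans
        (Set.mem_singleton_iff.1 hzj.2)))
  have hβsum : ∑ j, β j = 1 := by
    have h1 : (Q : Measure Ω) Set.univ = 1 := measure_univ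
    rw [hQrep, sum_dirac_apply x β MeasurableSet.univ] at h1
    simp only [Set.indicator_univ] at h1
    rw [← ENNReal.ofReal_sum_of_nonneg (fun j _ => hβ0 j)] at h1
    exact (ENNReal.ofReal_eq_ofReal_iff (Finset.sum_nonneg fun j _ => hβ0 j) zero_le_one).1
      (by rw [h1, ENNReal.ofReal_one])
  have hβc : ∀ i, ∑ j, β j * f i (x j) = c i := by
    intro i
    rw [← hQc i, hQrep, integral_sum_dirac x β hβ0 (hf i)]
  have hαc : ∀ i, ∑ j, α j * f i (x j) = c i := by
    intro i
    rw [← hP i, hPrep, integral_sum_dirac x α (fun j => (hIcc j).1) (hf i)]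
  have hg : ∀ j, β j - α j = 0 := by
    have hrel : ∑ j, (β j - α j) •
        (Fin.snoc (fun i : Fin k => f i (x j)) (1 : ℝ) : Fin (k + 1) → ℝ) = 0 := by
      funext p
      rw [Finset.sum_apply]
      simp only [Pi.smul_apply, smul_eq_mul, Pi.zero_apply]
      induction p using Fin.lastCases with
      | last =>
        simp only [Fin.snoc_last, mul_one]
        rw [Finset.sum_sub_distrib, hβsum, hsumα, sub_self]
      | cast i =>
        simp only [Fin.snoc_castSucc]
        have h : ∑ j, (β j - α j) * f i (x j)
            = (∑ j, β j * f i (x j)) - ∑ j, α j * f i (x j) := by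
          rw [← Finset.sum_sub_distrib]
          exact Finset.sum_congr rfl fun j _ => by ring
        rw [h, hβc i, hαc i, sub_self]
    exact fun j => Fintype.linearIndependent_iff.1 hLI _ hrel j
  have hβα : β = α := funext fun j => by have := hg j; linarith
  rw [hQrep, hβα, ← hPrep]

theorem extreme_points_of_moment_set
    {Ω : Type*} [MetricSpace Ω] [CompleteSpace Ω] [TopologicalSpace.SeparableSpace Ω]
    [MeasurableSpace Ω] [BorelSpace Ω] {k : ℕ}
    (f : Fin k → Ω → ℝ) (hf : ∀ i, Measurable (f i)) (c : Fin k → ℝ)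
    (ℋ ℋeq : Set (ProbabilityMeasure Ω))
    (hℋ : ℋ = {P : ProbabilityMeasure Ω | ∀ i, ∫ x, f i x ∂(P : Measure Ω) ≤ c i})
    (hℋeq : ℋeq = {P : ProbabilityMeasure Ω | ∀ i, ∫ x, f i x ∂(P : Measure Ω) = c i}) :
    -- ℋ_k is convex
    (∀ P ∈ ℋ, ∀ Q ∈ ℋ, ∀ α : ℝ≥0, α ≤ 1 → ∀ R : ProbabilityMeasure Ω,
      (R : Measure Ω) = α • (P : Measure Ω) + (1 - α) • (Q : Measure Ω) → R ∈ ℋ)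
    -- every extreme point of ℋ_k is of the stated discrete form
    ∧ (∀ P : ProbabilityMeasure Ω, IsExtremePM ℋ P → HasWinklerForm f P)
    -- with equality constraints, the extreme points are exactly the measures of that form
    ∧ (∀ P ∈ ℋeq, (IsExtremePM ℋeq P ↔ HasWinklerForm f P)) := by
  classical
  refine ⟨?_, ?_, ?_⟩
  · -- convexity
    intro P hP Q hQ a ha R hR
    rw [hℋ] at hP hQ ⊢
    simp only [Set.mem_setOf_eq] at hP hQ ⊢
    intro i
    rcases eq_or_ne a 0 with rfl | ha0
    · have h : (R : Measure Ω) = (Q : Measure Ω) := by rw [hR]; simp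
      rw [h]; exact hQ i
    rcases eq_or_ne a 1 with rfl | ha1
    · have h : (R : Measure Ω) = (P : Measure Ω) := by rw [hR]; simp
      rw [h]; exact hP i
    have hb0 : (1 - a : ℝ≥0) ≠ 0 := by
      intro h
      exact ha1 (le_antisymm ha (tsub_eq_zero_iff_le.1 h))
    have hcoea : ((a : ℝ≥0) : ℝ≥0∞) ≠ 0 := by exact_mod_cast ha0
    have hcoeb : (((1 - a : ℝ≥0)) : ℝ≥0∞) ≠ 0 := by exact_mod_cast hb0
    have hRrw : (R : Measure Ω)
        = ((a : ℝ≥0) : ℝ≥0∞) • (P : Measure Ω) + (((1 - a : ℝ≥0)) : ℝ≥0∞) • (Q : Measure Ω) :=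
      hR
    by_cases hint : Integrable (f i) (P : Measure Ω) ∧ Integrable (f i) (Q : Measure Ω)
    · rw [hRrw, integral_add_measure (hint.1.smul_measure ENNReal.coe_ne_top)
        (hint.2.smul_measure ENNReal.coe_ne_top), integral_smul_measure,
        integral_smul_measure]
      simp only [ENNReal.coe_toReal, smul_eq_mul]
      have h1 := hP i
      have h2 := hQ i
      have hc : ((1 - a : ℝ≥0) : ℝ) = 1 - (a : ℝ) := NNReal.coe_sub ha
      rw [hc]
      have ha01 : (0:ℝ) ≤ (a : ℝ) := a.coe_nonneg
      have ha11 : (a : ℝ) ≤ 1 := by exact_mod_cast ha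
      nlinarith [mul_le_mul_of_nonneg_left h1 ha01,
        mul_le_mul_of_nonneg_left h2 (by linarith : (0:ℝ) ≤ 1 - (a:ℝ))]
    · have hRnint : ¬ Integrable (f i) (R : Measure Ω) := by
        intro h
        apply hint
        constructor
        · have hle : ((a : ℝ≥0) : ℝ≥0∞) • (P : Measure Ω) ≤ (R : Measure Ω) := by
            rw [hRrw]
            refine Measure.le_iff.2 fun B hB => ?_
            rw [Measure.add_apply]
            exact le_add_right le_rfl
          exact (integrable_smul_measure hcoea ENNReal.coe_ne_top).1 (h.mono_measure hle)
        · have hle : (((1 - a : ℝ≥0)) : ℝ≥0∞) • (Q : Measure Ω) ≤ (R : Measure Ω) := by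
            rw [hRrw]
            refine Measure.le_iff.2 fun B hB => ?_
            rw [Measure.add_apply]
            exact le_add_left le_rfl
          exact (integrable_smul_measure hcoeb ENNReal.coe_ne_top).1 (h.mono_measure hle)
      rw [integral_undef hRnint]
      rcases not_and_or.1 hint with h | h
      · have := hP i; rw [integral_undef h] at this; exact this
      · have := hQ i; rw [integral_undef h] at this; exact this
  · -- extreme points of the inequality moment set
    intro P hext
    refine extreme_to_winkler f hf P ℋ ?_ hext
    intro Q hQ
    have hPmem := hext.1
    rw [hℋ] at hPmem ⊢
    simp only [Set.mem_setOf_eq] at hPmem ⊢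
    intro i
    rw [hQ i]
    exact hPmem i
  · -- equality constraints
    intro P hPmem
    have hPc : ∀ i, ∫ y, f i y ∂(P : Measure Ω) = c i := by
      rw [hℋeq] at hPmem; exact hPmem
    constructor
    · intro hext
      refine extreme_to_winkler f hf P ℋeq ?_ hext
      intro Q hQ
      rw [hℋeq]
      simp only [Set.mem_setOf_eq]
      intro i
      rw [hQ i]
      exact hPc i
    · intro hform
      refine ⟨hPmem, ?_⟩
      rintro ⟨Q, hQ, R, hR, a, hQR, ha0, ha1, heq⟩
      rw [hℋeq] at hQ hR
      simp only [Set.mem_setOf_eq] at hQ hR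
      apply hQR
      apply ProbabilityMeasure.toMeasure_injective
      have h1a : (((1 - a : ℝ≥0)) : ℝ≥0∞) ≠ 0 := by
        have h : (1 - a : ℝ≥0) ≠ 0 := by
          intro h
          exact (not_le.2 ha1) (tsub_eq_zero_iff_le.1 h)
        exact_mod_cast h
      have heq' : (P : Measure Ω)
          = (((1 - a : ℝ≥0)) : ℝ≥0∞) • (Q : Measure Ω) + ((a : ℝ≥0) : ℝ≥0∞) • (R : Measure Ω) :=
        heq
      have hQP := winkler_eq f hf c P hPc hform Q hQ (((1 - a : ℝ≥0)) : ℝ≥0∞) h1a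
        (by rw [heq']
            refine Measure.le_iff.2 fun B hB => ?_
            rw [Measure.add_apply]
            exact le_add_right le_rfl)
      have hRP := winkler_eq f hf c P hPc hform R hR ((a : ℝ≥0) : ℝ≥0∞)
        (by exact_mod_cast ha0.ne')
        (by rw [heq']
            refine Measure.le_iff.2 fun B hB => ?_
            rw [Measure.add_apply]
            exact le_add_left le_rfl)
      rw [hQP, hRP]
end

section
/- (Dubins' theorem) Let 𝒱 be a real vector space and let 𝒦 ⊂ 𝒱 be a convex set that is linearly closed and linearly bounded, i.e., for all v, w ∈ 𝒱 with w ≠ 0 the set {t ∈ ℝ : v + t·w ∈ 𝒦} is closed and bounded in ℝ. Let ℒ_1,…,ℒ_n be hyperplanes, ℒ_i = {v ∈ 𝒱 : f_i(v) = c_i} with f_i : 𝒱 → ℝ linear and c_i ∈ ℝ, and let ℐ = 𝒦 ∩ ℒ_1 ∩ … ∩ ℒ_n. Then every extreme point of ℐ is a convex combination of at most n+1 extreme points of 𝒦. -/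
open Set

section Face
variable {V : Type*} [AddCommGroup V] [Module ℝ V]

/-- The face of a convex set `A` generated by a point `x ∈ A`. -/
def faceAt (A : Set V) (x : V) : Set V :=
  {y ∈ A | ∃ z ∈ A, x ∈ openSegment ℝ y z}

variable {A : Set V} {x : V}

lemma faceAt_subset : faceAt A x ⊆ A := fun _ h => h.1

lemma mem_faceAt_self (hx : x ∈ A) : x ∈ faceAt A x :=
  ⟨hx, x, hx, by rw [openSegment_same]; exact mem_singleton x⟩

lemma isExtreme_faceAt (hA : Convex ℝ A) (hx : x ∈ A) : IsExtreme ℝ A (faceAt A x) := by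
  refine ⟨faceAt_subset, ?_⟩
  rintro y₁ hy₁ y₂ hy₂ p ⟨hpA, z, hzA, s, s', hs, hs', hss, hx_eq⟩
    ⟨t, t', ht, ht', htt, hp_eq⟩
  have key : ∀ (u₁ u₂ : V), u₁ ∈ A → u₂ ∈ A → (∃ a b : ℝ, 0 < a ∧ 0 < b ∧ a + b = 1 ∧
      a • u₁ + b • u₂ = p) → u₁ ∈ faceAt A x := by
    rintro u₁ u₂ hu₁ hu₂ ⟨a, b, ha, hb, hab, hup⟩
    have hsa1 : s * a < 1 := by nlinarith
    have h1 : (0:ℝ) < 1 - s * a := by linarith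
    have hwA : (s * b / (1 - s * a)) • u₂ + (s' / (1 - s * a)) • z ∈ A := by
      refine hA hu₂ hzA (by positivity) (by positivity) ?_
      field_simp
      nlinarith
    refine ⟨hu₁, _, hwA, s * a, 1 - s * a, by positivity, h1, by ring, ?_⟩
    rw [smul_add, smul_smul, smul_smul, mul_div_cancel₀ _ (ne_of_gt h1),
      mul_div_cancel₀ _ (ne_of_gt h1)]
    rw [← hx_eq, ← hup, smul_add, smul_smul, smul_smul]
    abel
  exact key y₁ y₂ hy₁ hy₂ ⟨t, t', ht, ht', htt, hp_eq⟩

lemma convex_faceAt (hA : Convex ℝ A) (hx : x ∈ A) : Convex ℝ (faceAt A x) := by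
  rintro y₁ ⟨hy₁, z₁, hz₁, t₁, t₁', ht₁, ht₁', htt₁, hx₁⟩
    y₂ ⟨hy₂, z₂, hz₂, t₂, t₂', ht₂, ht₂', htt₂, hx₂⟩ a b ha hb hab
  rcases eq_or_lt_of_le ha with rfl | ha'
  · have hb1 : b = 1 := by linarith
    have h0 : (0:ℝ) • y₁ + b • y₂ = y₂ := by rw [hb1]; simp
    rw [h0]
    exact ⟨hy₂, z₂, hz₂, t₂, t₂', ht₂, ht₂', htt₂, hx₂⟩
  rcases eq_or_lt_of_le hb with rfl | hb'
  · have ha1 : a = 1 := by linarith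
    have h0 : a • y₁ + (0:ℝ) • y₂ = y₁ := by rw [ha1]; simp
    rw [h0]
    exact ⟨hy₁, z₁, hz₁, t₁, t₁', ht₁, ht₁', htt₁, hx₁⟩
  refine ⟨hA hy₁ hy₂ ha hb hab, ?_⟩
  set s : ℝ := t₁ * t₂ with hs_def
  set r₁ : ℝ := a * t₂ * t₁' with hr₁_def
  set r₂ : ℝ := b * t₁ * t₂' with hr₂_def
  set Q : ℝ := a * t₂ + b * t₁ with hQ_def
  have hs : (0:ℝ) < s := by positivity
  have hr₁ : (0:ℝ) < r₁ := by positivity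
  have hr₂ : (0:ℝ) < r₂ := by positivity
  have hR : (0:ℝ) < r₁ + r₂ := by linarith
  have hQ : (0:ℝ) < Q := by positivity
  have hsRQ : s + (r₁ + r₂) = Q := by
    have e₁ : t₁' = 1 - t₁ := by linarith
    have e₂ : t₂' = 1 - t₂ := by linarith
    rw [hs_def, hr₁_def, hr₂_def, hQ_def, e₁, e₂]
    linear_combination (-(t₁*t₂)) * hab
  have hkey : s • (a • y₁ + b • y₂) + (r₁ • z₁ + r₂ • z₂) = Q • x := by
    rw [hs_def, hr₁_def, hr₂_def, hQ_def]
    linear_combination (norm := module) (a*t₂ : ℝ) • hx₁ + (b*t₁ : ℝ) • hx₂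
  have hzA : (r₁ / (r₁ + r₂)) • z₁ + (r₂ / (r₁ + r₂)) • z₂ ∈ A := by
    refine hA hz₁ hz₂ (by positivity) (by positivity) ?_
    field_simp
  refine ⟨_, hzA, s / Q, (r₁ + r₂) / Q, by positivity, by positivity, ?_, ?_⟩
  · rw [← add_div, hsRQ, div_self hQ.ne']
  · refine smul_right_injective V hQ.ne' ?_
    show Q • _ = Q • x
    rw [← hkey]
    match_scalars <;> field_simp <;> try ring

lemma combo_mem_faceAt (hA : Convex ℝ A) (hx : x ∈ A) {p : V} (hp : p ∈ faceAt A x)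
    {t : ℝ} (h0 : 0 ≤ t) (h1 : t ≤ 1) : x + t • (p - x) ∈ faceAt A x := by
  have h := convex_faceAt hA hx (mem_faceAt_self hx) hp (by linarith : (0:ℝ) ≤ 1 - t) h0
    (by ring)
  have e : (1 - t) • x + t • p = x + t • (p - x) := by module
  rwa [e] at h

/-- The set of directions along which one can move from `x` (in both directions)
while staying in the face of `A` at `x`. -/
def dirSet (A : Set V) (x : V) : Set V :=
  {d | ∃ ε : ℝ, 0 < ε ∧ x + ε • d ∈ faceAt A x ∧ x - ε • d ∈ faceAt A x}

lemma eps_mono (hA : Convex ℝ A) (hx : x ∈ A) {d : V} {ε ε' : ℝ}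
    (h : x + ε • d ∈ faceAt A x) (hε : 0 < ε) (h0 : 0 ≤ ε') (hle : ε' ≤ ε) :
    x + ε' • d ∈ faceAt A x := by
  have h2 := combo_mem_faceAt hA hx h (t := ε' / ε) (by positivity)
    ((div_le_one hε).2 hle)
  have e : x + (ε' / ε) • (x + ε • d - x) = x + ε' • d := by
    rw [add_sub_cancel_left, smul_smul, div_mul_cancel₀ _ hε.ne']
  rwa [e] at h2

lemma zero_mem_dirSet (hx : x ∈ A) : (0 : V) ∈ dirSet A x :=
  ⟨1, one_pos, by simpa using mem_faceAt_self hx, by simpa using mem_faceAt_self hx⟩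

lemma neg_eps (hA : Convex ℝ A) {d : V} {ε : ℝ} :
    x - ε • d = x + ε • (-d) := by module

lemma smul_mem_dirSet (hA : Convex ℝ A) (hx : x ∈ A) {d : V} (hd : d ∈ dirSet A x)
    (c : ℝ) : c • d ∈ dirSet A x := by
  obtain ⟨ε, hε, hp, hm⟩ := hd
  rcases lt_trichotomy c 0 with hc | rfl | hc
  · have hc' : (0:ℝ) < -c := neg_pos.2 hc
    have hcoef : ε / (-c) * c = -ε := by
      rw [div_mul_eq_mul_div, div_neg, mul_div_assoc, div_self hc.ne, mul_one]
    refine ⟨ε / (-c), by positivity, ?_, ?_⟩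
    · have e : x + (ε / (-c)) • (c • d) = x - ε • d := by
        rw [smul_smul, hcoef]; module
      rw [e]; exact hm
    · have e : x - (ε / (-c)) • (c • d) = x + ε • d := by
        rw [smul_smul, hcoef]; module
      rw [e]; exact hp
  · simpa using zero_mem_dirSet hx
  · refine ⟨ε / c, by positivity, ?_, ?_⟩
    · have e : (ε / c) • (c • d) = ε • d := by
        rw [smul_smul, div_mul_cancel₀ _ hc.ne']
      rw [e]; exact hp
    · have e : (ε / c) • (c • d) = ε • d := by
        rw [smul_smul, div_mul_cancel₀ _ hc.ne']
      rw [e]; exact hm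

lemma add_mem_dirSet (hA : Convex ℝ A) (hx : x ∈ A) {d₁ d₂ : V}
    (h₁ : d₁ ∈ dirSet A x) (h₂ : d₂ ∈ dirSet A x) : d₁ + d₂ ∈ dirSet A x := by
  obtain ⟨ε₁, hε₁, hp₁, hm₁⟩ := h₁
  obtain ⟨ε₂, hε₂, hp₂, hm₂⟩ := h₂
  set ε := min ε₁ ε₂ with hε_def
  have hε : 0 < ε := lt_min hε₁ hε₂
  have hp₁' : x + ε • d₁ ∈ faceAt A x := eps_mono hA hx hp₁ hε₁ hε.le (min_le_left _ _)
  have hp₂' : x + ε • d₂ ∈ faceAt A x := eps_mono hA hx hp₂ hε₂ hε.le (min_le_right _ _)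
  have hm₁' : x + ε • (-d₁) ∈ faceAt A x := by
    rw [neg_eps hA] at hm₁
    exact eps_mono hA hx hm₁ hε₁ hε.le (min_le_left _ _)
  have hm₂' : x + ε • (-d₂) ∈ faceAt A x := by
    rw [neg_eps hA] at hm₂
    exact eps_mono hA hx hm₂ hε₂ hε.le (min_le_right _ _)
  have hF := convex_faceAt hA hx
  refine ⟨ε / 2, by positivity, ?_, ?_⟩
  · have h := hF hp₁' hp₂' (by norm_num : (0:ℝ) ≤ 1/2) (by norm_num : (0:ℝ) ≤ 1/2)
      (by norm_num)
    have e : (1/2 : ℝ) • (x + ε • d₁) + (1/2 : ℝ) • (x + ε • d₂)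
        = x + (ε / 2) • (d₁ + d₂) := by
      match_scalars <;> ring
    rwa [e] at h
  · have h := hF hm₁' hm₂' (by norm_num : (0:ℝ) ≤ 1/2) (by norm_num : (0:ℝ) ≤ 1/2)
      (by norm_num)
    have e : (1/2 : ℝ) • (x + ε • (-d₁)) + (1/2 : ℝ) • (x + ε • (-d₂))
        = x - (ε / 2) • (d₁ + d₂) := by
      match_scalars <;> ring
    rwa [e] at h

/-- The directions of the face of `A` at `x`, as a submodule. -/
def dirSubmodule (A : Set V) (x : V) (hA : Convex ℝ A) (hx : x ∈ A) : Submodule ℝ V where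
  carrier := dirSet A x
  zero_mem' := zero_mem_dirSet hx
  add_mem' := add_mem_dirSet hA hx
  smul_mem' := fun c _ hd => smul_mem_dirSet hA hx hd c

lemma sub_mem_dirSet_of_mem_faceAt (hA : Convex ℝ A) (hx : x ∈ A) {y : V}
    (hy : y ∈ faceAt A x) : y - x ∈ dirSet A x := by
  obtain ⟨hyA, z, hzA, t, t', ht, ht', htt, hxeq⟩ := hy
  have hzF : z ∈ faceAt A x := ⟨hzA, y, hyA, t', t, ht', ht, by linarith,
    by rw [add_comm]; exact hxeq⟩
  have hyF : y ∈ faceAt A x := ⟨hyA, z, hzA, t, t', ht, ht', htt, hxeq⟩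
  refine ⟨t, ht, ?_, ?_⟩
  · have h := combo_mem_faceAt hA hx hyF ht.le (by linarith)
    rwa [show x + t • (y - x) = x + t • (y - x) from rfl] at h
  · have h := combo_mem_faceAt hA hx hzF ht'.le (by linarith : t' ≤ 1)
    have e : x + t' • (z - x) = x - t • (y - x) := by
      have ht'' : t' = 1 - t := by linarith
      have hxeq' : t • y + (1 - t) • z = x := by rw [← ht'']; exact hxeq
      rw [ht'']
      linear_combination (norm := module) hxeq'
    rwa [e] at h

lemma mem_faceAt_of_sub_mem_dirSet (hA : Convex ℝ A) (hx : x ∈ A) {y : V}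
    (hyA : y ∈ A) (hy : y - x ∈ dirSet A x) : y ∈ faceAt A x := by
  obtain ⟨ε, hε, _, hm⟩ := hy
  refine ⟨hyA, x - ε • (y - x), (faceAt_subset hm : _ ∈ A), ε / (1 + ε), 1 / (1 + ε),
    by positivity, by positivity, ?_, ?_⟩
  · field_simp
    ring
  · refine smul_right_injective V (show (1 + ε) ≠ 0 by positivity) ?_
    show (1 + ε) • _ = (1 + ε) • x
    match_scalars <;> field_simp <;> ring

lemma coe_dirSubmodule (hA : Convex ℝ A) (hx : x ∈ A) :
    ((dirSubmodule A x hA hx : Submodule ℝ V) : Set V) = dirSet A x := rfl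

end Face

section Minkowski
variable {E : Type*} [NormedAddCommGroup E] [NormedSpace ℝ E] [FiniteDimensional ℝ E]

/-- A point of a compact convex set whose face-direction module misses some direction of
`vectorSpan s` lies on a "smaller" face. -/
lemma mem_hull_extreme_of_dir_missing
    (ih : ∀ (u : Set E), Convex ℝ u → IsCompact u →
      Module.finrank ℝ (vectorSpan ℝ u) < Module.finrank ℝ (vectorSpan ℝ ((∅ : Set E))) →
      u ⊆ convexHull ℝ (u.extremePoints ℝ)) :
    True := trivial

theorem minkowski (d : ℕ) : ∀ (s : Set E), Convex ℝ s → IsCompact s →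
    Module.finrank ℝ (vectorSpan ℝ s) ≤ d → s ⊆ convexHull ℝ (s.extremePoints ℝ) := by
  induction d with
  | zero =>
    intro s hconv hcomp hrank p hp
    have hbot : vectorSpan ℝ s = ⊥ := by
      have := Nat.le_zero.1 hrank
      exact Submodule.finrank_eq_zero.1 this
    refine subset_convexHull ℝ _ ?_
    refine ⟨hp, fun y hy z hz hseg => ?_⟩
    have hyz : y - z ∈ vectorSpan ℝ s := by
      have := vsub_mem_vectorSpan ℝ hy hz
      simpa using this
    rw [hbot, Submodule.mem_bot, sub_eq_zero] at hyz
    subst hyz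
    rw [openSegment_same] at hseg
    exact hseg.symm
  | succ d ih =>
    intro s hconv hcomp hrank x hx
    by_cases hxe : x ∈ s.extremePoints ℝ
    · exact subset_convexHull ℝ _ hxe
    -- x is not extreme: find a maximal segment through x
    rw [mem_extremePoints] at hxe
    push_neg at hxe
    obtain ⟨y, hy, z, hz, hseg, hne⟩ := hxe hx
    obtain ⟨a, b, ha, hb, hab, hxeq⟩ := hseg
    have hyz : y ≠ z := by
      rintro rfl
      have h0 : a • y + b • y = y := by
        rw [← add_smul, hab, one_smul]
      rw [h0] at hxeq
      exact hne hxeq hxeq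
    set w : E := z - y with hw_def
    have hw : w ≠ 0 := sub_ne_zero.2 (Ne.symm hyz)
    have hwspan : w ∈ vectorSpan ℝ s := by
      have := vsub_mem_vectorSpan ℝ hz hy
      simpa using this
    set T : Set ℝ := {t | x + t • w ∈ s} with hT_def
    have hγ : Continuous fun t : ℝ => x + t • w :=
      continuous_const.add (continuous_id.smul continuous_const)
    have hTclosed : IsClosed T := hcomp.isClosed.preimage hγ
    have hTbdd : Bornology.IsBounded T := by
      obtain ⟨M, hM⟩ := hcomp.isBounded.exists_norm_le
      rw [isBounded_iff_forall_norm_le]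
      refine ⟨(M + ‖x‖) / ‖w‖, fun t ht => ?_⟩
      have h1 : ‖x + t • w‖ ≤ M := hM _ ht
      have h2 : ‖t • w‖ ≤ M + ‖x‖ := by
        calc ‖t • w‖ = ‖x + t • w - x‖ := by rw [add_sub_cancel_left]
        _ ≤ ‖x + t • w‖ + ‖x‖ := norm_sub_le _ _
        _ ≤ M + ‖x‖ := by linarith
      rw [norm_smul] at h2
      rw [Real.norm_eq_abs] at *
      rw [le_div_iff₀ (norm_pos_iff.2 hw)]
      exact h2
    have hTcomp : IsCompact T := Metric.isCompact_of_isClosed_isBounded hTclosed hTbdd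
    have hb' : b = 1 - a := by linarith
    have ha1 : a < 1 := by linarith
    have hxeq' : a • y + (1 - a) • z = x := by rw [← hb']; exact hxeq
    have hbT : a - 1 ∈ T := by
      show x + (a - 1) • w ∈ s
      have e : x + (a - 1) • w = y := by
        rw [hw_def]
        linear_combination (norm := module) (-1 : ℝ) • hxeq'
      rwa [e]
    have haT : a ∈ T := by
      show x + a • w ∈ s
      have e : x + a • w = z := by
        rw [hw_def]
        linear_combination (norm := module) (-1 : ℝ) • hxeq'
      rwa [e]
    have hTne : T.Nonempty := ⟨a, haT⟩
    set τa := sInf T with hτa_def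
    set τb := sSup T with hτb_def
    have hτaT : τa ∈ T := hTcomp.sInf_mem hTne
    have hτbT : τb ∈ T := hTcomp.sSup_mem hTne
    have hτa : τa ≤ a - 1 := csInf_le hTbdd.bddBelow hbT
    have hτb : a ≤ τb := le_csSup hTbdd.bddAbove haT
    have hτa0 : τa < 0 := lt_of_le_of_lt hτa (by linarith)
    have hτb0 : 0 < τb := lt_of_lt_of_le ha hτb
    have hτab : τa < τb := by linarith
    set y' := x + τa • w with hy'_def
    set z' := x + τb • w with hz'_def
    have hy's : y' ∈ s := hτaT
    have hz's : z' ∈ s := hτbT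
    -- key: a point p ∈ s such that some direction of vectorSpan s is not in dirSet s p
    -- lies in the convex hull of the extreme points
    have key : ∀ p ∈ s, w ∉ dirSet s p → p ∈ convexHull ℝ (s.extremePoints ℝ) := by
      intro p hp hwnot
      set Smod := dirSubmodule s p hconv hp with hSmod_def
      have hSmem : ∀ v : E, v ∈ Smod ↔ v ∈ dirSet s p := fun v => by
        constructor
        · intro h; rw [← coe_dirSubmodule hconv hp]; exact h
        · intro h; have : v ∈ (Smod : Set E) := by rw [coe_dirSubmodule hconv hp]; exact h
          exact this
      set F := faceAt s p with hF_def
      have hFeq : F = s ∩ {v | v - p ∈ Smod} := by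
        ext v
        constructor
        · intro hv
          exact ⟨faceAt_subset hv, (hSmem _).2 (sub_mem_dirSet_of_mem_faceAt hconv hp hv)⟩
        · rintro ⟨hvs, hvd⟩
          exact mem_faceAt_of_sub_mem_dirSet hconv hp hvs ((hSmem _).1 hvd)
      have hFconv : Convex ℝ F := convex_faceAt hconv hp
      have hFcomp : IsCompact F := by
        rw [hFeq]
        exact hcomp.inter_right
          ((Submodule.closed_of_finiteDimensional Smod).preimage (continuous_id.sub continuous_const))
      have hSle : Smod ≤ vectorSpan ℝ s := by
        intro v hv
        obtain ⟨ε, hε, hplus, _⟩ := (hSmem _).1 hv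
        have h1 : (p + ε • v) -ᵥ p ∈ vectorSpan ℝ s :=
          vsub_mem_vectorSpan ℝ (faceAt_subset hplus) hp
        have h2 : ε • v ∈ vectorSpan ℝ s := by simpa using h1
        have := Submodule.smul_mem _ (ε⁻¹) h2
        rwa [smul_smul, inv_mul_cancel₀ hε.ne', one_smul] at this
      have hSlt : Smod < vectorSpan ℝ s := lt_of_le_of_ne hSle (by
        intro h
        exact hwnot ((hSmem _).1 (h ▸ hwspan)))
      have hrankF : Module.finrank ℝ (vectorSpan ℝ F) ≤ d := by
        have h1 : vectorSpan ℝ F ≤ Smod := by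
          rw [vectorSpan_def]
          rw [Submodule.span_le]
          rintro u ⟨u₁, hu₁, u₂, hu₂, rfl⟩
          have h12 : (u₁ - p) - (u₂ - p) ∈ Smod := Submodule.sub_mem _
            ((hSmem _).2 (sub_mem_dirSet_of_mem_faceAt hconv hp hu₁))
            ((hSmem _).2 (sub_mem_dirSet_of_mem_faceAt hconv hp hu₂))
          simpa [vsub_eq_sub, sub_sub_sub_cancel_right] using h12
        have h2 : Module.finrank ℝ Smod < Module.finrank ℝ (vectorSpan ℝ s) :=
          Submodule.finrank_lt_finrank_of_lt hSlt
        have h3 : Module.finrank ℝ (vectorSpan ℝ F) ≤ Module.finrank ℝ Smod :=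
          Submodule.finrank_mono h1
        omega
      have hpF : p ∈ F := mem_faceAt_self hp
      have hsub := ih F hFconv hFcomp hrankF hpF
      refine convexHull_mono ((isExtreme_faceAt hconv hp).extremePoints_subset_extremePoints) hsub
    have hy'h : y' ∈ convexHull ℝ (s.extremePoints ℝ) := by
      refine key y' hy's ?_
      rintro ⟨ε, hε, _, hminus⟩
      have : y' - ε • w ∈ s := faceAt_subset hminus
      have hmem : τa - ε ∈ T := by
        show x + (τa - ε) • w ∈ s
        have e : x + (τa - ε) • w = y' - ε • w := by rw [hy'_def]; module
        rwa [e]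
      have : τa ≤ τa - ε := csInf_le hTbdd.bddBelow hmem
      linarith
    have hz'h : z' ∈ convexHull ℝ (s.extremePoints ℝ) := by
      refine key z' hz's ?_
      rintro ⟨ε, hε, hplus, _⟩
      have : z' + ε • w ∈ s := faceAt_subset hplus
      have hmem : τb + ε ∈ T := by
        show x + (τb + ε) • w ∈ s
        have e : x + (τb + ε) • w = z' + ε • w := by rw [hz'_def]; module
        rwa [e]
      have : τb + ε ≤ τb := le_csSup hTbdd.bddAbove hmem
      linarith
    -- x is a convex combination of y' and z'
    have hxseg : x ∈ segment ℝ y' z' := by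
      have hba : (0:ℝ) < τb - τa := by linarith
      refine ⟨τb / (τb - τa), -τa / (τb - τa), div_nonneg (by linarith) (by linarith),
        div_nonneg (by linarith) (by linarith), ?_, ?_⟩
      · rw [← add_div, div_eq_one_iff_eq hba.ne']
        ring
      · have hd : τb - τa ≠ 0 := by linarith
        refine smul_right_injective E hd ?_
        show (τb - τa) • _ = (τb - τa) • x
        rw [hy'_def, hz'_def]
        match_scalars <;> field_simp <;> ring
    exact (convex_convexHull ℝ _).segment_subset hy'h hz'h hxseg

end Minkowski

theorem dubins_theorem {V : Type*} [AddCommGroup V] [Module ℝ V]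
    (K : Set V) (hKconv : Convex ℝ K)
    -- K is linearly closed and linearly bounded
    (hKclosed : ∀ v w : V, w ≠ 0 → IsClosed {t : ℝ | v + t • w ∈ K})
    (hKbdd : ∀ v w : V, w ≠ 0 → Bornology.IsBounded {t : ℝ | v + t • w ∈ K})
    {n : ℕ} (f : Fin n → V →ₗ[ℝ] ℝ) (c : Fin n → ℝ)
    (I : Set V) (hI : I = K ∩ ⋂ i, {v : V | f i v = c i}) :
    ∀ x ∈ Set.extremePoints ℝ I,
      ∃ m : ℕ, m ≤ n + 1 ∧ ∃ e : Fin m → V,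
        (∀ i, e i ∈ Set.extremePoints ℝ K) ∧
        ∃ α : Fin m → ℝ, (∀ i, 0 ≤ α i) ∧ (∑ i, α i = 1) ∧ x = ∑ i, α i • e i := by
  intro x hx
  have hxI : x ∈ I := hx.1
  have hxK : x ∈ K := by rw [hI] at hxI; exact hxI.1
  have hxc : ∀ i, f i x = c i := by
    rw [hI] at hxI
    intro i
    exact Set.mem_iInter.1 hxI.2 i
  set F := faceAt K x with hF_def
  set Smod := dirSubmodule K x hKconv hxK with hSmod_def
  have hSmem : ∀ v : V, v ∈ Smod ↔ v ∈ dirSet K x := fun v => by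
    constructor
    · intro h; rw [← coe_dirSubmodule hKconv hxK]; exact h
    · intro h
      have : v ∈ (Smod : Set V) := by rw [coe_dirSubmodule hKconv hxK]; exact h
      exact this
  -- the constraint map on Smod is injective
  set φ : Smod →ₗ[ℝ] (Fin n → ℝ) := LinearMap.pi (fun i => (f i).comp Smod.subtype) with hφ_def
  have hφinj : Function.Injective φ := by
    rw [← LinearMap.ker_eq_bot, LinearMap.ker_eq_bot']
    intro d hd
    have hfd : ∀ i, f i (d : V) = 0 := by
      intro i
      have := congrFun hd i
      simpa [hφ_def] using this
    by_contra hd0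
    have hdV : (d : V) ≠ 0 := fun h => hd0 (Subtype.ext h)
    obtain ⟨ε, hε, hplus, hminus⟩ := (hSmem _).1 d.2
    have hplusI : x + ε • (d : V) ∈ I := by
      rw [hI]
      refine ⟨faceAt_subset hplus, Set.mem_iInter.2 fun i => ?_⟩
      show f i (x + ε • (d : V)) = c i
      rw [map_add, map_smul, hfd i, smul_zero, add_zero, hxc i]
    have hminusI : x - ε • (d : V) ∈ I := by
      rw [hI]
      refine ⟨faceAt_subset hminus, Set.mem_iInter.2 fun i => ?_⟩
      show f i (x - ε • (d : V)) = c i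
      rw [map_sub, map_smul, hfd i, smul_zero, sub_zero, hxc i]
    have hseg : x ∈ openSegment ℝ (x + ε • (d : V)) (x - ε • (d : V)) := by
      refine ⟨1/2, 1/2, by norm_num, by norm_num, by norm_num, ?_⟩
      module
    have := hx.2 hplusI hminusI hseg
    have heps : ε • (d : V) = 0 := by
      have h0 := this
      calc ε • (d : V) = (x + ε • (d : V)) - x := by abel
      _ = 0 := by rw [h0]; abel
    exact hdV (by
      have := smul_eq_zero.1 heps
      rcases this with h | h
      · exact absurd h hε.ne'
      · exact h)
  haveI hSfin : FiniteDimensional ℝ Smod := FiniteDimensional.of_injective φ hφinj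
  have hrankS : Module.finrank ℝ Smod ≤ n := by
    have h1 := LinearMap.finrank_le_finrank_of_injective hφinj
    rwa [Module.finrank_pi ℝ, Fintype.card_fin] at h1
  set d := Module.finrank ℝ Smod with hd_def
  set ξ : Smod ≃ₗ[ℝ] (Fin d → ℝ) := (Module.finBasis ℝ Smod).equivFun with hξ_def
  set L : (Fin d → ℝ) →ₗ[ℝ] V := Smod.subtype ∘ₗ ξ.symm.toLinearMap with hL_def
  have hLinj : Function.Injective L := by
    intro u v huv
    have : ξ.symm u = ξ.symm v := Subtype.ext huv
    exact ξ.symm.injective this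
  have hLmem : ∀ u, L u ∈ Smod := fun u => (ξ.symm u).2
  set C : Set (Fin d → ℝ) := {u | x + L u ∈ F} with hC_def
  have hc0 : (0 : Fin d → ℝ) ∈ C := by
    show x + L 0 ∈ F
    rw [map_zero, add_zero]
    exact mem_faceAt_self hxK
  have hCconv : Convex ℝ C := by
    intro u hu v hv a b ha hb hab
    show x + L (a • u + b • v) ∈ F
    have e : x + L (a • u + b • v) = a • (x + L u) + b • (x + L v) := by
      rw [map_add, map_smul, map_smul]
      match_scalars <;> simp [hab] <;> ring
    rw [e]
    exact convex_faceAt hKconv hxK hu hv ha hb hab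
  have hsurj : ∀ y ∈ F, ∃ u ∈ C, y = x + L u := by
    intro y hy
    have hmem : y - x ∈ Smod := (hSmem _).2 (sub_mem_dirSet_of_mem_faceAt hKconv hxK hy)
    refine ⟨ξ ⟨y - x, hmem⟩, ?_, ?_⟩
    · show x + L (ξ ⟨y - x, hmem⟩) ∈ F
      have : L (ξ ⟨y - x, hmem⟩) = y - x := by
        rw [hL_def]
        simp
      rw [this, add_sub_cancel]
      exact hy
    · have : L (ξ ⟨y - x, hmem⟩) = y - x := by
        rw [hL_def]; simp
      rw [this, add_sub_cancel]
  have habsorb : ∀ u : Fin d → ℝ, ∃ ε : ℝ, 0 < ε ∧ ε • u ∈ C ∧ -(ε • u) ∈ C := by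
    intro u
    obtain ⟨ε, hε, hplus, hminus⟩ := (hSmem _).1 (ξ.symm u).2
    refine ⟨ε, hε, ?_, ?_⟩
    · show x + L (ε • u) ∈ F
      have : L (ε • u) = ε • ((ξ.symm u : Smod) : V) := by rw [map_smul]; rfl
      rw [this]; exact hplus
    · show x + L (-(ε • u)) ∈ F
      have : x + L (-(ε • u)) = x - ε • ((ξ.symm u : Smod) : V) := by
        rw [map_neg, map_smul]
        have : (L u : V) = ((ξ.symm u : Smod) : V) := rfl
        rw [this]; module
      rw [this]; exact hminus
  -- the line sets of C are closed and bounded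
  have hline : ∀ u₀ u : Fin d → ℝ, u ≠ 0 →
      {t : ℝ | u₀ + t • u ∈ C} = {t : ℝ | (x + L u₀) + t • (L u) ∈ K} := by
    intro u₀ u hu
    ext t
    constructor
    · intro ht
      have h1 : x + L (u₀ + t • u) ∈ F := ht
      have e : x + L (u₀ + t • u) = (x + L u₀) + t • (L u) := by
        rw [map_add, map_smul]; module
      rw [e] at h1
      exact h1.1
    · intro ht
      show x + L (u₀ + t • u) ∈ F
      have e : x + L (u₀ + t • u) = (x + L u₀) + t • (L u) := by
        rw [map_add, map_smul]; module
      rw [e]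
      refine mem_faceAt_of_sub_mem_dirSet hKconv hxK ht ?_
      have : (x + L u₀) + t • (L u) - x = L (u₀ + t • u) := by
        rw [map_add, map_smul]; module
      rw [this]
      exact (hSmem _).1 (hLmem _)
  have hLne : ∀ u : Fin d → ℝ, u ≠ 0 → L u ≠ 0 := by
    intro u hu h
    exact hu (hLinj (by rw [h, map_zero]))
  -- 0 is in the interior of C
  have hspan : affineSpan ℝ C = ⊤ := by
    rw [eq_top_iff]
    intro u _
    obtain ⟨ε, hε, hp, hm⟩ := habsorb u
    have h1 : (ε • u : Fin d → ℝ) ∈ affineSpan ℝ C := subset_affineSpan ℝ C hp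
    have h0 : (0 : Fin d → ℝ) ∈ affineSpan ℝ C := subset_affineSpan ℝ C hc0
    have := AffineSubspace.smul_vsub_vadd_mem (affineSpan ℝ C) (1/ε) h1 h0 h0
    have e : (1/ε) • (ε • u -ᵥ (0:Fin d → ℝ)) +ᵥ (0:Fin d → ℝ) = u := by
      rw [vsub_eq_sub, sub_zero, vadd_eq_add, add_zero, smul_smul, one_div,
        inv_mul_cancel₀ hε.ne', one_smul]
    rwa [e] at this
  obtain ⟨p, hpint⟩ := (hCconv.interior_nonempty_iff_affineSpan_eq_top).2 hspan
  have h0int : (0 : Fin d → ℝ) ∈ interior C := by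
    obtain ⟨ε, hε, _, hm⟩ := habsorb p
    have h1 : (0:ℝ) < ε / (1 + ε) := by positivity
    have h2 : (0:ℝ) ≤ 1 / (1 + ε) := by positivity
    have h3 : ε / (1 + ε) + 1 / (1 + ε) = 1 := by field_simp; ring
    have h4 := hCconv.combo_interior_closure_mem_interior hpint (subset_closure hm) h1 h2 h3
    have e : (ε / (1 + ε)) • p + (1 / (1 + ε)) • (-(ε • p)) = 0 := by
      match_scalars <;> field_simp <;> ring
    rwa [e] at h4
  -- C is closed
  have hCclosed : IsClosed C := by
    refine isClosed_of_closure_subset ?_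
    intro y hy
    by_cases hy0 : y = 0
    · rw [hy0]; exact hc0
    set G : Set ℝ := {t : ℝ | (0 : Fin d → ℝ) + t • y ∈ C} with hG_def
    have hGclosed : IsClosed G := by
      rw [hG_def, hline 0 y hy0]
      exact hKclosed _ _ (hLne y hy0)
    have hIco : Set.Ico (0:ℝ) 1 ⊆ G := by
      intro t ⟨ht0, ht1⟩
      show (0 : Fin d → ℝ) + t • y ∈ C
      have h4 := hCconv.combo_interior_closure_mem_interior h0int hy
        (by linarith : (0:ℝ) < 1 - t) ht0 (by ring)
      have e : (1 - t) • (0 : Fin d → ℝ) + t • y = 0 + t • y := by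
        rw [smul_zero]
      rw [e] at h4
      exact interior_subset h4
    have h1G : (1:ℝ) ∈ G := by
      have h1cl : (1:ℝ) ∈ closure (Set.Ico (0:ℝ) 1) := by
        rw [closure_Ico (by norm_num : (0:ℝ) ≠ 1)]
        exact ⟨by norm_num, le_refl 1⟩
      exact hGclosed.closure_subset (closure_mono hIco h1cl)
    have : (0 : Fin d → ℝ) + (1:ℝ) • y ∈ C := h1G
    rwa [zero_add, one_smul] at this
  -- C is bounded
  have hCbdd : Bornology.IsBounded C := by
    by_contra hub
    have hgrow : ∀ k : ℕ, ∃ u, u ∈ C ∧ (k:ℝ) < ‖u‖ := by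
      intro k
      by_contra h
      push_neg at h
      exact hub (isBounded_iff_forall_norm_le.2 ⟨k, h⟩)
    choose u hu hnorm using hgrow
    have hupos : ∀ k, (0:ℝ) < ‖u k‖ := fun k => lt_of_le_of_lt (Nat.cast_nonneg k) (hnorm k)
    set v : ℕ → (Fin d → ℝ) := fun k => ‖u k‖⁻¹ • u k with hv_def
    have hvsph : ∀ k, v k ∈ Metric.sphere (0 : Fin d → ℝ) 1 := by
      intro k
      simp only [Metric.mem_sphere, dist_zero_right, hv_def, norm_smul, norm_inv, norm_norm]
      rw [inv_mul_cancel₀ (hupos k).ne']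
    obtain ⟨vinf, hvinf, ψ, hψ, hconv⟩ :=
      (isCompact_sphere (0 : Fin d → ℝ) 1).tendsto_subseq hvsph
    have hvinfne : vinf ≠ 0 := by
      intro h
      rw [h] at hvinf
      simp at hvinf
    have hray : ∀ t : ℝ, 0 ≤ t → t • vinf ∈ C := by
      intro t ht
      have htend : Filter.Tendsto (fun k => t • v (ψ k)) Filter.atTop (nhds (t • vinf)) :=
        hconv.const_smul t
      refine hCclosed.mem_of_tendsto htend ?_
      have hev : ∀ᶠ k in Filter.atTop, t ≤ ‖u (ψ k)‖ := by
        have : ∀ k : ℕ, k ≥ ⌈t⌉₊ → t ≤ ‖u (ψ k)‖ := by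
          intro k hk
          have h1 : (k:ℝ) ≤ (ψ k : ℝ) := by exact_mod_cast (hψ.le_apply)
          have h2 : ((ψ k : ℕ):ℝ) < ‖u (ψ k)‖ := hnorm (ψ k)
          have h3 : t ≤ (⌈t⌉₊ : ℝ) := Nat.le_ceil t
          have h4 : ((⌈t⌉₊ : ℕ) : ℝ) ≤ (k : ℝ) := by exact_mod_cast hk
          linarith
        exact Filter.eventually_atTop.2 ⟨⌈t⌉₊, this⟩
      refine hev.mono fun k hk => ?_
      show t • v (ψ k) ∈ C
      have hcoef : t • v (ψ k) = (1 - t / ‖u (ψ k)‖) • (0 : Fin d → ℝ)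
          + (t / ‖u (ψ k)‖) • u (ψ k) := by
        rw [smul_zero, zero_add, hv_def, smul_smul, div_eq_mul_inv]
      rw [hcoef]
      refine hCconv hc0 (hu (ψ k)) ?_ ?_ (by ring)
      · have := hupos (ψ k)
        have hdiv : t / ‖u (ψ k)‖ ≤ 1 := by
          rw [div_le_one this]; exact hk
        linarith [div_nonneg ht this.le]
      · exact div_nonneg ht (hupos (ψ k)).le
    -- but the line through 0 in direction vinf meets C in a bounded set
    have hlbdd : Bornology.IsBounded {t : ℝ | (0 : Fin d → ℝ) + t • vinf ∈ C} := by
      rw [hline 0 vinf hvinfne]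
      exact hKbdd _ _ (hLne vinf hvinfne)
    obtain ⟨R, hR⟩ := isBounded_iff_forall_norm_le.1 hlbdd
    have hmem : max 0 (R + 1) ∈ {t : ℝ | (0 : Fin d → ℝ) + t • vinf ∈ C} := by
      show (0 : Fin d → ℝ) + max 0 (R + 1) • vinf ∈ C
      rw [zero_add]
      exact hray _ (le_max_left 0 (R+1))
    have := hR _ hmem
    rw [Real.norm_eq_abs] at this
    have h1 : R + 1 ≤ max 0 (R + 1) := le_max_right _ _
    have h2 : max 0 (R+1) ≤ |max 0 (R+1)| := le_abs_self _
    linarith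
  have hCcomp : IsCompact C := Metric.isCompact_of_isClosed_isBounded hCclosed hCbdd
  -- apply Minkowski's theorem
  have hrankC : Module.finrank ℝ (vectorSpan ℝ C) ≤ d := by
    have h1 : Module.finrank ℝ (vectorSpan ℝ C) ≤ Module.finrank ℝ (Fin d → ℝ) :=
      Submodule.finrank_le _
    rwa [Module.finrank_pi ℝ, Fintype.card_fin] at h1
  have h0hull : (0 : Fin d → ℝ) ∈ convexHull ℝ (C.extremePoints ℝ) :=
    minkowski d C hCconv hCcomp hrankC hc0
  -- pull back extreme points
  have hpull : ∀ q ∈ C.extremePoints ℝ, x + L q ∈ K.extremePoints ℝ := by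
    intro q hq
    have hqF : x + L q ∈ (faceAt K x).extremePoints ℝ := by
      refine ⟨hq.1, ?_⟩
      intro y₁ hy₁ y₂ hy₂ hseg
      obtain ⟨u₁, hu₁, rfl⟩ := hsurj y₁ hy₁
      obtain ⟨u₂, hu₂, rfl⟩ := hsurj y₂ hy₂
      obtain ⟨a, b, ha, hb, hab, heq⟩ := hseg
      have e : a • (x + L u₁) + b • (x + L u₂) = x + L (a • u₁ + b • u₂) := by
        rw [map_add, map_smul, map_smul]
        match_scalars <;> simp [hab] <;> ring
      rw [e] at heq
      have hq_eq : q = a • u₁ + b • u₂ := (hLinj (add_left_cancel heq)).symm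
      have hqseg : q ∈ openSegment ℝ u₁ u₂ := ⟨a, b, ha, hb, hab, hq_eq.symm⟩
      obtain ⟨h1, h2⟩ := hq.2 hu₁ hu₂ hqseg
      constructor
    exact (isExtreme_faceAt hKconv hxK).extremePoints_subset_extremePoints hqF
  -- Caratheodory
  obtain ⟨ι, hFin, z, wgt, hrange, haff, hpos, hsum, hcomb⟩ :=
    eq_pos_convex_span_of_mem_convexHull h0hull
  letI := hFin
  have hcard : Fintype.card ι ≤ d + 1 := by
    have h1 := haff.card_le_finrank_succ
    have h2 : Module.finrank ℝ (vectorSpan ℝ (Set.range z)) ≤ d := by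
      have h3 : Module.finrank ℝ (vectorSpan ℝ (Set.range z)) ≤ Module.finrank ℝ (Fin d → ℝ) :=
        Submodule.finrank_le _
      rwa [Module.finrank_pi ℝ, Fintype.card_fin] at h3
    omega
  set m := Fintype.card ι with hm_def
  have hmn : m ≤ n + 1 := by omega
  set ee : Fin m ≃ ι := (Fintype.equivFin ι).symm with hee_def
  refine ⟨m, hmn, fun i => x + L (z (ee i)), ?_, fun i => wgt (ee i), ?_, ?_, ?_⟩
  · intro i
    exact hpull _ (hrange (Set.mem_range_self (ee i)))
  · intro i
    exact (hpos (ee i)).le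
  · rw [← hsum]
    exact Equiv.sum_comp ee wgt
  · have hsum' : ∑ i : Fin m, wgt (ee i) = 1 := by
      rw [← hsum]; exact Equiv.sum_comp ee wgt
    have e1 : ∑ i : Fin m, wgt (ee i) • (x + L (z (ee i)))
        = (∑ i : Fin m, wgt (ee i)) • x + L (∑ i : Fin m, wgt (ee i) • z (ee i)) := by
      rw [map_sum, Finset.sum_smul]
      rw [← Finset.sum_add_distrib]
      congr 1
      ext i
      rw [smul_add, map_smul]
    have e2 : ∑ i : Fin m, wgt (ee i) • z (ee i) = ∑ j : ι, wgt j • z j :=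
      Equiv.sum_comp ee (fun j => wgt j • z j)
    rw [e1, hsum', one_smul, e2, hcomb, map_zero, add_zero]
end

section
/- Fix i and suppose P_Y(j)(p,x) > 0 for all j = 1,…,N at the point (p,x) ∈ ℝ^d × ℝ^d. Then the partial derivative of the minimum mean square error g with respect to the probability mass p_i satisfies ∂g/∂p_i (p,x) = Σ_{j=1}^N W_j(x_i) · (x_i − m_j(p,x))². -/
open Finset

/-- `P_Y(j)(p,x) = Σ_i p_i W_j(x_i)`, the induced marginal probability of `y_j`. -/
noncomputable def PY {N d : ℕ} (W : Fin N → ℝ → ℝ) (p x : Fin d → ℝ) (j : Fin N) : ℝ :=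
  ∑ i, p i * W j (x i)

/-- `m_j(p,x) = (Σ_i p_i x_i W_j(x_i)) / P_Y(j)(p,x)`, the conditional mean `E[X | Y = y_j]`. -/
noncomputable def condMean {N d : ℕ} (W : Fin N → ℝ → ℝ) (p x : Fin d → ℝ) (j : Fin N) : ℝ :=
  (∑ i, p i * x i * W j (x i)) / PY W p x j

/-- The minimum mean square error `g(p,x) = Σ_i p_i x_i² − Σ_j P_Y(j)(p,x) m_j(p,x)²`. -/
noncomputable def mmseG {N d : ℕ} (W : Fin N → ℝ → ℝ) (p x : Fin d → ℝ) : ℝ :=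
  ∑ i, p i * (x i) ^ 2 - ∑ j, PY W p x j * (condMean W p x j) ^ 2

theorem mmse_deriv_in_probability {N d : ℕ}
    (W : Fin N → ℝ → ℝ) (hW : ∀ j, ContDiff ℝ 1 (W j))
    (hWnn : ∀ j t, 0 ≤ W j t) (hWsum : ∀ t : ℝ, ∑ j, W j t = 1)
    (p x : Fin d → ℝ) (i : Fin d)
    (hpos : ∀ j, 0 < PY W p x j) :
    HasDerivAt (fun t : ℝ => mmseG W (Function.update p i t) x)
      (∑ j, W j (x i) * (x i - condMean W p x j) ^ 2) (p i) := by
  have hupd : Function.update p i (p i) = p := Function.update_eq_self i p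
  have key : ∀ (c : Fin d → ℝ),
      HasDerivAt (fun t => ∑ k, Function.update p i t k * c k) (c i) (p i) := by
    intro c
    have h : HasDerivAt (fun t => ∑ k ∈ Finset.univ, Function.update p i t k * c k)
        (∑ k ∈ Finset.univ, (if k = i then c i else 0)) (p i) := by
      apply HasDerivAt.fun_sum
      intro k _
      rcases eq_or_ne k i with rfl | hk
      · simpa [Function.update_self] using (hasDerivAt_id (p k)).mul_const (c k)
      · simpa [Function.update_of_ne hk, hk] using hasDerivAt_const (p i) (p k * c k)
    simpa using h
  have hA : ∀ j, HasDerivAt (fun t => PY W (Function.update p i t) x j) (W j (x i)) (p i) :=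
    fun j => key (fun k => W j (x k))
  have hB : ∀ j, HasDerivAt
      (fun t => ∑ k, Function.update p i t k * x k * W j (x k)) (x i * W j (x i)) (p i) := by
    intro j
    simpa [mul_assoc] using key (fun k => x k * W j (x k))
  set a : Fin N → ℝ := fun j => PY W p x j with ha
  set b : Fin N → ℝ := fun j => ∑ k, p k * x k * W j (x k) with hb
  have hterm : ∀ j, HasDerivAt
      (fun t => PY W (Function.update p i t) x j * (condMean W (Function.update p i t) x j) ^ 2)
      (W j (x i) * (b j / a j) ^ 2 +
        a j * ((2 : ℕ) * (b j / a j) ^ 1 *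
          ((x i * W j (x i) * a j - b j * W j (x i)) / a j ^ 2))) (p i) := by
    intro j
    have hAj := hA j
    have hBj := hB j
    have hne : PY W (Function.update p i (p i)) x j ≠ 0 := by rw [hupd]; exact (hpos j).ne'
    have hdiv := hBj.fun_div hAj hne
    have := hAj.fun_mul (hdiv.fun_pow 2)
    have hbj : ∑ k, p k * x k * W j (x k) = b j := rfl
    simpa [hupd, condMean, ← ha, ← hb, hbj] using this
  have hg : HasDerivAt (fun t : ℝ => mmseG W (Function.update p i t) x)
      (x i ^ 2 - ∑ j, (W j (x i) * (b j / a j) ^ 2 +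
        a j * ((2 : ℕ) * (b j / a j) ^ 1 *
          ((x i * W j (x i) * a j - b j * W j (x i)) / a j ^ 2)))) (p i) := by
    exact (key (fun k => x k ^ 2)).sub (HasDerivAt.fun_sum fun j _ => hterm j)
  convert hg using 1
  have hx : x i ^ 2 = ∑ j, W j (x i) * x i ^ 2 := by
    rw [← Finset.sum_mul, hWsum (x i), one_mul]
  rw [hx, ← Finset.sum_sub_distrib]
  refine Finset.sum_congr rfl fun j _ => ?_
  have haj : a j ≠ 0 := (hpos j).ne'
  have hcm : condMean W p x j = b j / a j := rfl
  rw [hcm]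
  field_simp
  ring
end

section
/- Fix i and suppose P_Y(j)(p,x) > 0 for all j = 1,…,N at the point (p,x) ∈ ℝ^d × ℝ^d. Then the partial derivative of the minimum mean square error g with respect to the location x_i satisfies ∂g/∂x_i (p,x) = 2 p_i (x_i − Σ_{j=1}^N W_j(x_i) m_j(p,x)) + p_i Σ_{j=1}^N W_j'(x_i) (m_j(p,x)² − 2 x_i m_j(p,x)). -/
open Finset

theorem mmse_deriv_in_location {N d : ℕ}
    (W : Fin N → ℝ → ℝ) (hW : ∀ j, ContDiff ℝ 1 (W j))
    (hWnn : ∀ j t, 0 ≤ W j t) (hWsum : ∀ t : ℝ, ∑ j, W j t = 1)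
    (p x : Fin d → ℝ) (i : Fin d)
    (hpos : ∀ j, 0 < PY W p x j) :
    HasDerivAt (fun t : ℝ => mmseG W p (Function.update x i t))
      (2 * p i * (x i - ∑ j, W j (x i) * condMean W p x j)
        + p i * ∑ j, deriv (W j) (x i)
            * ((condMean W p x j) ^ 2 - 2 * x i * condMean W p x j)) (x i) := by
  classical
  have hx : Function.update x i (x i) = x := Function.update_eq_self i x
  set m : Fin N → ℝ := condMean W p x with hm
  have hWd : ∀ j t, HasDerivAt (W j) (deriv (W j) t) t := fun j t =>
    (((hW j).differentiable one_ne_zero) t).hasDerivAt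
  set a : Fin N → ℝ := fun j => ∑ k ∈ Finset.univ.erase i, p k * W j (x k) with ha
  set b : Fin N → ℝ := fun j => ∑ k ∈ Finset.univ.erase i, p k * x k * W j (x k) with hb
  set c1 : ℝ := ∑ k ∈ Finset.univ.erase i, p k * (x k) ^ 2 with hc1
  have hupd : ∀ (t : ℝ) (k : Fin d), k ∈ Finset.univ.erase i → Function.update x i t k = x k :=
    fun t k hk => Function.update_of_ne (Finset.ne_of_mem_erase hk) _ _
  have hPfun : ∀ j t, PY W p (Function.update x i t) j = p i * W j t + a j := by
    intro j t
    rw [PY, ← Finset.add_sum_erase _ _ (Finset.mem_univ i), Function.update_self]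
    congr 1
    exact Finset.sum_congr rfl fun k hk => by rw [hupd t k hk]
  have hSfun : ∀ j t, (∑ k, p k * Function.update x i t k * W j (Function.update x i t k))
      = p i * (t * W j t) + b j := by
    intro j t
    rw [← Finset.add_sum_erase _ _ (Finset.mem_univ i), Function.update_self]
    congr 1
    · ring
    · exact Finset.sum_congr rfl fun k hk => by rw [hupd t k hk]
  have hQfun : ∀ t, (∑ k, p k * (Function.update x i t k) ^ 2) = p i * t ^ 2 + c1 := by
    intro t
    rw [← Finset.add_sum_erase _ _ (Finset.mem_univ i), Function.update_self]
    congr 1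
    exact Finset.sum_congr rfl fun k hk => by rw [hupd t k hk]
  have key : ∀ t, mmseG W p (Function.update x i t)
      = (p i * t ^ 2 + c1) - ∑ j, (p i * (t * W j t) + b j) ^ 2 / (p i * W j t + a j) := by
    intro t
    rw [mmseG, hQfun]
    congr 1
    refine Finset.sum_congr rfl fun j _ => ?_
    rw [condMean, hPfun, hSfun]
    rcases eq_or_ne (p i * W j t + a j) 0 with h | h
    · simp [h]
    · field_simp
  have hPne : ∀ j, p i * W j (x i) + a j ≠ 0 := by
    intro j
    rw [← hPfun j (x i), hx]
    exact (hpos j).ne'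
  have hSval : ∀ j, p i * (x i * W j (x i)) + b j = m j * (p i * W j (x i) + a j) := by
    intro j
    rw [← hSfun j (x i), ← hPfun j (x i), hx, hm, condMean]
    field_simp [(hpos j).ne']
  have hA : HasDerivAt (fun t : ℝ => p i * t ^ 2 + c1) (2 * p i * x i) (x i) := by
    have h1 : HasDerivAt (fun t : ℝ => t ^ 2) (2 * x i) (x i) := by
      simpa using hasDerivAt_pow 2 (x i)
    have := (h1.const_mul (p i)).add_const c1
    refine this.congr_deriv ?_
    ring
  have hS : ∀ j, HasDerivAt (fun t => p i * (t * W j t) + b j)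
      (p i * (1 * W j (x i) + x i * deriv (W j) (x i))) (x i) :=
    fun j => (((hasDerivAt_id (x i)).mul (hWd j (x i))).const_mul (p i)).add_const _
  have hP : ∀ j, HasDerivAt (fun t => p i * W j t + a j)
      (p i * deriv (W j) (x i)) (x i) :=
    fun j => ((hWd j (x i)).const_mul (p i)).add_const _
  have hsum : HasDerivAt
      (fun t => ∑ j, (p i * (t * W j t) + b j) ^ 2 / (p i * W j t + a j))
      (∑ j, (2 * (p i * (x i * W j (x i)) + b j)
              * (p i * (1 * W j (x i) + x i * deriv (W j) (x i)))
              * (p i * W j (x i) + a j)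
            - (p i * (x i * W j (x i)) + b j) ^ 2 * (p i * deriv (W j) (x i)))
          / (p i * W j (x i) + a j) ^ 2) (x i) := by
    refine HasDerivAt.fun_sum fun j _ => ?_
    have := ((hS j).pow 2).div (hP j) (hPne j)
    refine this.congr_deriv ?_
    simp only [Pi.pow_apply]
    push_cast
    ring
  have htot := hA.sub hsum
  have hterm : ∀ j : Fin N, (2 * (p i * (x i * W j (x i)) + b j)
              * (p i * (1 * W j (x i) + x i * deriv (W j) (x i)))
              * (p i * W j (x i) + a j)
            - (p i * (x i * W j (x i)) + b j) ^ 2 * (p i * deriv (W j) (x i)))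
          / (p i * W j (x i) + a j) ^ 2
      = 2 * p i * (W j (x i) * m j)
        - p i * (deriv (W j) (x i) * ((m j) ^ 2 - 2 * x i * m j)) := by
    intro j
    rw [hSval j]
    have hne := hPne j
    set q : ℝ := p i * W j (x i) + a j with hq
    field_simp
    ring
  simp only [key]
  refine htot.congr_deriv ?_
  simp only [hterm, Finset.sum_sub_distrib, ← Finset.mul_sum]
  ring
end
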